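/- arXiv:2411.10311 — 8 statements merged into one kernel-verified Lean document; each statement's English description precedes it below -/
import Mathlib

section
/- Let K ≥ 1, let S ∈ ℝ^{K×K} have nonnegative entries, let τ > 0, and let v, w ∈ ℝ^K be entrywise positive with Sw and Sᵗv entrywise positive solving the Dyson equation. Then for every i: 1 = w_i (Sᵗv)_i + τ v_i/(Sᵗv)_i; hence w = (1/(Sᵗv))(1 − τ v/(Sᵗv)) entrywise, 0 < τ v_i < (Sᵗv)_i for all i, 1 − v_i(Sw)_i = τ v_i/(Sᵗv)_i for all i, and τ v_i w_i = (1 − v_i(Sw)_i)·(v_i(Sw)_i) for all i. -/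
open Matrix

/-- For an entrywise positive solution `(v, w)` of the Dyson equation
`1/v = Sw + τ/(Sᵗv)`, `1/w = Sᵗv + τ/(Sw)` (with `S` nonnegative, `τ > 0`):
`1 = w_i (Sᵗv)_i + τ v_i/(Sᵗv)_i` for all `i`; hence `w = (1/(Sᵗv))(1 − τ v/(Sᵗv))` entrywise,
`0 < τ v_i < (Sᵗv)_i`, `1 − v_i (Sw)_i = τ v_i/(Sᵗv)_i`, and
`τ v_i w_i = (1 − v_i (Sw)_i)·(v_i (Sw)_i)` for all `i`. -/
theorem stmt_1 (K : ℕ) (hK : 1 ≤ K) (S : Matrix (Fin K) (Fin K) ℝ)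
    (hS : ∀ i j, 0 ≤ S i j) (τ : ℝ) (hτ : 0 < τ)
    (v w : Fin K → ℝ) (hv : ∀ i, 0 < v i) (hw : ∀ i, 0 < w i)
    (hSw : ∀ i, 0 < S.mulVec w i) (hStv : ∀ i, 0 < Sᵀ.mulVec v i)
    (heq1 : ∀ i, 1 / v i = S.mulVec w i + τ / Sᵀ.mulVec v i)
    (heq2 : ∀ i, 1 / w i = Sᵀ.mulVec v i + τ / S.mulVec w i) :
    (∀ i, 1 = w i * Sᵀ.mulVec v i + τ * v i / Sᵀ.mulVec v i) ∧
    (∀ i, w i = (1 / Sᵀ.mulVec v i) * (1 - τ * v i / Sᵀ.mulVec v i)) ∧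
    (∀ i, 0 < τ * v i ∧ τ * v i < Sᵀ.mulVec v i) ∧
    (∀ i, 1 - v i * S.mulVec w i = τ * v i / Sᵀ.mulVec v i) ∧
    (∀ i, τ * (v i * w i) = (1 - v i * S.mulVec w i) * (v i * S.mulVec w i)) := by
  -- key per-index facts
  have key : ∀ i, (1 - v i * S.mulVec w i) * Sᵀ.mulVec v i = τ * v i ∧
      (1 - w i * Sᵀ.mulVec v i) * S.mulVec w i = τ * w i ∧
      v i * S.mulVec w i = w i * Sᵀ.mulVec v i := by
    intro i
    set p := Sᵀ.mulVec v i with hp'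
    set q := S.mulVec w i with hq'
    have hp := hStv i
    have hq := hSw i
    have hvi := hv i
    have hwi := hw i
    have h1 : (1 - v i * q) * p = τ * v i := by
      have := heq1 i
      field_simp at this
      nlinarith [this]
    have h2 : (1 - w i * p) * q = τ * w i := by
      have := heq2 i
      field_simp at this
      nlinarith [this]
    refine ⟨h1, h2, ?_⟩
    linear_combination v i * h2 - w i * h1
  have h4 : ∀ i, 1 - v i * S.mulVec w i = τ * v i / Sᵀ.mulVec v i := by
    intro i
    obtain ⟨h1, _, _⟩ := key i
    rw [eq_div_iff (hStv i).ne']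
    exact h1
  have h1 : ∀ i, 1 = w i * Sᵀ.mulVec v i + τ * v i / Sᵀ.mulVec v i := by
    intro i
    obtain ⟨_, _, h3⟩ := key i
    have := h4 i
    rw [← this, ← h3]
    ring
  refine ⟨h1, ?_, ?_, h4, ?_⟩
  · intro i
    have hp := hStv i
    have e : 1 - τ * v i / Sᵀ.mulVec v i = w i * Sᵀ.mulVec v i := by linarith [h1 i]
    rw [e]
    field_simp
  · intro i
    refine ⟨mul_pos hτ (hv i), ?_⟩
    obtain ⟨hk1, _, _⟩ := key i
    have hp := hStv i
    nlinarith [mul_pos (mul_pos (mul_pos (hv i) (hSw i)) (hv i)) (hSw i),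
      mul_pos (mul_pos (mul_pos (hv i) (hSw i)) (hv i)) hp,
      mul_pos (mul_pos (hv i) (hSw i)) hp]
  · intro i
    obtain ⟨hk1, _, hk3⟩ := key i
    have hp := (hStv i).ne'
    have e : (τ * (v i * w i)) * Sᵀ.mulVec v i =
        ((1 - v i * S.mulVec w i) * (v i * S.mulVec w i)) * Sᵀ.mulVec v i := by
      linear_combination (-(v i * S.mulVec w i)) * hk1 + (-(τ * v i)) * hk3
    exact mul_right_cancel₀ hp e
end

section
/- Let K ≥ 1, let S ∈ ℝ^{K×K} have nonnegative entries, let τ > 0, and let x ∈ ℝ^K satisfy 0 < x and τ x < Sᵗx entrywise, together with the equation 1/x = S( (1/(Sᵗx))(1 − τ x/(Sᵗx)) ) + τ/(Sᵗx). Define y := (1/(Sᵗx))(1 − τ x/(Sᵗx)). Then y is entrywise positive, Sy is entrywise positive, and the pair (x, y) solves the Dyson equation: 1/x = Sy + τ/(Sᵗx) and 1/y = Sᵗx + τ/(Sy). -/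
open Matrix

lemma stmt_4_aux (s u t : ℝ) (hu : 0 < u) (ht : 0 < t) (h : t * u < s) :
    1 / (1 / s * (1 - t * u / s)) = s + t / (1 / u - t / s) := by
  have hs : 0 < s := lt_trans (mul_pos ht hu) h
  have hd : s - t * u ≠ 0 := by linarith
  rw [show 1 / u - t / s = (s - t * u) / (u * s) from by
    field_simp]
  rw [show 1 / s * (1 - t * u / s) = (s - t * u) / (s * s) from by
    field_simp]
  rw [one_div_div, div_div_eq_mul_div]
  rw [div_eq_iff hd, add_mul, div_mul_eq_mul_div, mul_div_assoc,
    div_self hd, mul_one]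
  ring

/-- Let `S` be nonnegative, `τ > 0`, and let `x` satisfy `0 < x`,
`τ x < Sᵗx` entrywise and the self-consistent equation
`1/x = S((1/(Sᵗx))(1 − τ x/(Sᵗx))) + τ/(Sᵗx)`. Then `y := (1/(Sᵗx))(1 − τ x/(Sᵗx))` is
entrywise positive with `Sy` entrywise positive, and `(x, y)` solves the Dyson equation
`1/x = Sy + τ/(Sᵗx)`, `1/y = Sᵗx + τ/(Sy)`. -/
theorem stmt_4 (K : ℕ) (hK : 1 ≤ K) (S : Matrix (Fin K) (Fin K) ℝ)
    (hS : ∀ i j, 0 ≤ S i j) (τ : ℝ) (hτ : 0 < τ)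
    (x : Fin K → ℝ) (hx : ∀ i, 0 < x i) (hx2 : ∀ i, τ * x i < Sᵀ.mulVec x i)
    (heq : ∀ i, 1 / x i =
      S.mulVec (fun j => (1 / Sᵀ.mulVec x j) * (1 - τ * x j / Sᵀ.mulVec x j)) i
        + τ / Sᵀ.mulVec x i) :
    let y : Fin K → ℝ := fun j => (1 / Sᵀ.mulVec x j) * (1 - τ * x j / Sᵀ.mulVec x j)
    (∀ i, 0 < y i) ∧ (∀ i, 0 < S.mulVec y i) ∧
    (∀ i, 1 / x i = S.mulVec y i + τ / Sᵀ.mulVec x i) ∧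
    (∀ i, 1 / y i = Sᵀ.mulVec x i + τ / S.mulVec y i) := by
  intro y
  have hs : ∀ i, 0 < Sᵀ.mulVec x i := fun i =>
    lt_trans (mul_pos hτ (hx i)) (hx2 i)
  have hy : ∀ i, 0 < y i := by
    intro i
    apply mul_pos (one_div_pos.mpr (hs i))
    have : τ * x i / Sᵀ.mulVec x i < 1 := (div_lt_one (hs i)).mpr (hx2 i)
    linarith
  have hSy : ∀ i, S.mulVec y i = 1 / x i - τ / Sᵀ.mulVec x i := by
    intro i
    have := heq i
    simp only [y]
    linarith
  have hSypos : ∀ i, 0 < S.mulVec y i := by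
    intro i
    rw [hSy i]
    rw [div_sub_div _ _ (ne_of_gt (hx i)) (ne_of_gt (hs i))]
    apply div_pos
    · have := hx2 i; linarith
    · exact mul_pos (hx i) (hs i)
  refine ⟨hy, hSypos, fun i => heq i, fun i => ?_⟩
  rw [hSy i]
  have hxi := hx i
  have hsi := hs i
  have h2 := hx2 i
  simp only [y]
  exact stmt_4_aux _ _ _ hxi hτ h2
end

section
/- Let S ∈ ℝ^{K×K} be irreducible with nonnegative entries, let 0 < τ < ρ(S), and let (v,w) be an entrywise positive solution of the Dyson equation with ⟨v⟩ = ⟨w⟩; assume moreover that every entrywise positive solution (v′,w′) of the Dyson equation at the same τ is of the form (α v, α⁻¹ w) for some α > 0. Then: (i) v lies in the domain D_τ := {x ∈ ℝ^K : 0 < x and τ x < Sᵗx entrywise} of the functional J; (ii) J(v) = inf{J(x) : x ∈ D_τ}; and (iii) every sequence x⁽ⁿ⁾ ∈ D_τ with ⟨x⁽ⁿ⁾⟩ = ⟨v⟩ for all n and J(x⁽ⁿ⁾) → inf_{D_τ} J converges to v. -/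
/-!
`J` is invariant under scaling and nonnegative on the open positive cone. Normalize a minimizing
sequence over the cone to a fixed average and extract a convergent subsequence. Its limit `y` is
positive: if `y q = 0`, irreducibility gives an edge `S p q > 0` with `y p > 0`, and then
`τ x_q / (Sᵗx)_q → 0` drives `J` to `+∞`. At the minimizer `y` the derivative of `J` vanishes,
which says that `r = 1 - τ y / (Sᵗy)` is a fixed vector of the irreducible column-stochastic
matrix `y_k S_ki / (Sᵗy)_i`. So either `r > 0` or `r ≤ 0`; the latter contradicts `τ < ρ` by
comparison with the Perron eigenvector. Hence `(y, r / (Sᵗy))` solves the Dyson equation and `y`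
is a multiple of `v`. As `v ∈ D_τ`, `J(v)` is also the infimum over `D_τ`, and the same
compactness argument shows that minimizing sequences of average `⟨v⟩` converge to `v`.
-/

open Matrix Filter Topology

/-- The normalized average `⟨x⟩ = (1/K) ∑ i, x i` of a vector. -/
noncomputable def avg {K : ℕ} (x : Fin K → ℝ) : ℝ := (∑ i, x i) / K

/-- The Dyson equation (at `η = 0`) with parameter `τ > 0` for an entrywise positive pair
`(v, w)` with `Sw`, `Sᵗv` entrywise positive: `1/v = Sw + τ/(Sᵗv)`, `1/w = Sᵗv + τ/(Sw)`. -/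
def DysonSol {K : ℕ} (S : Matrix (Fin K) (Fin K) ℝ) (τ : ℝ) (v w : Fin K → ℝ) : Prop :=
  (∀ i, 0 < v i) ∧ (∀ i, 0 < w i) ∧
  (∀ i, 0 < S.mulVec w i) ∧ (∀ i, 0 < Sᵀ.mulVec v i) ∧
  (∀ i, 1 / v i = S.mulVec w i + τ / Sᵀ.mulVec v i) ∧
  (∀ i, 1 / w i = Sᵀ.mulVec v i + τ / S.mulVec w i)

/-- The domain `D_τ = {x : 0 < x, τ x < Sᵗx entrywise}` of the functional `J`. -/
def Dtau {K : ℕ} (S : Matrix (Fin K) (Fin K) ℝ) (τ : ℝ) : Set (Fin K → ℝ) :=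
  {x | (∀ i, 0 < x i) ∧ ∀ i, τ * x i < Sᵀ.mulVec x i}

/-- The functional `J(x) = ⟨τ x/(Sᵗx)⟩ − ⟨log(τ x/(Sᵗx))⟩`. -/
noncomputable def Jfun {K : ℕ} (S : Matrix (Fin K) (Fin K) ℝ) (τ : ℝ) (x : Fin K → ℝ) : ℝ :=
  avg (fun i => τ * x i / Sᵀ.mulVec x i) - avg (fun i => Real.log (τ * x i / Sᵀ.mulVec x i))

namespace Matrix

variable {n : Type*} {A : Matrix n n ℝ}

theorem IsIrreducible.exists_mem_notMem_apply_pos (hA : A.IsIrreducible) {P : Set n} {j i : n}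
    (hj : j ∈ P) (hi : i ∉ P) : ∃ p ∈ P, ∃ q ∉ P, 0 < A p q := by
  let := toQuiver A
  obtain ⟨path, -⟩ := hA.connected j i
  induction path with
  | nil => exact absurd hj hi
  | @cons b c _ e ih =>
    by_cases hb : b ∈ P
    · exact ⟨b, hb, c, hi, e.down⟩
    · exact ih hb

theorem IsIrreducible.exists_pos_in_col (hA : A.IsIrreducible) (i : n) : ∃ k, 0 < A k i := by
  let := toQuiver A
  obtain ⟨path, hlen⟩ := hA.connected i i
  cases path with
  | nil => simp at hlen
  | cons _ e => exact ⟨_, e.down⟩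

theorem IsIrreducible.of_pos_imp_pos (hA : A.IsIrreducible) {B : Matrix n n ℝ}
    (hB : ∀ i j, 0 ≤ B i j) (hAB : ∀ i j, 0 < A i j → 0 < B i j) : B.IsIrreducible := by
  refine ⟨hB, fun i j => ?_⟩
  have lift : ∀ {k} (q : @Quiver.Path n (toQuiver A) i k),
      ∃ q' : @Quiver.Path n (toQuiver B) i k,
        @Quiver.Path.length n (toQuiver B) _ _ q' = @Quiver.Path.length n (toQuiver A) _ _ q := by
    intro k q
    induction q with
    | nil => exact ⟨@Quiver.Path.nil n (toQuiver B) i, rfl⟩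
    | cons _ e ih =>
      obtain ⟨q', hq'⟩ := ih
      exact ⟨@Quiver.Path.cons n (toQuiver B) _ _ _ q' ⟨hAB _ _ e.down⟩, by simp [hq']⟩
  obtain ⟨p, hp⟩ := hA.connected i j
  obtain ⟨p', hp'⟩ := lift p
  exact ⟨p', hp'.symm ▸ hp⟩

variable [Fintype n]

theorem apply_mul_le_mulVec {x : n → ℝ} (hA : ∀ i j, 0 ≤ A i j) (hx : 0 ≤ x) (i j : n) :
    A i j * x j ≤ (A *ᵥ x) i :=
  Finset.single_le_sum (f := fun j => A i j * x j) (fun j _ => mul_nonneg (hA i j) (hx j))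
    (Finset.mem_univ j)

theorem IsIrreducible.mulVec_pos (hA : A.IsIrreducible) {x : n → ℝ} (hx : ∀ i, 0 < x i)
    (i : n) : 0 < (A *ᵥ x) i := by
  obtain ⟨k, hk⟩ := hA.transpose.exists_pos_in_col i
  exact (mul_pos hk (hx k)).trans_le (apply_mul_le_mulVec hA.nonneg (fun j => (hx j).le) i k)

theorem IsIrreducible.pos_of_mulVec_le (hA : A.IsIrreducible) {x : n → ℝ} (hx : 0 ≤ x)
    (hAx : A *ᵥ x ≤ x) {j : n} (hj : 0 < x j) (i : n) : 0 < x i := by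
  by_contra hi
  obtain ⟨p, hp, q, hq, hpq⟩ := hA.exists_mem_notMem_apply_pos (P := {i | x i = 0})
    (le_antisymm (not_lt.mp hi) (hx i)) hj.ne'
  have hxq : 0 < x q := lt_of_le_of_ne (hx q) (Ne.symm hq)
  exact ((mul_pos hpq hxq).trans_le ((apply_mul_le_mulVec hA.nonneg hx p q).trans (hAx p))).ne' hp

theorem IsIrreducible.pos_or_nonpos_of_mulVec_eq [DecidableEq n] (hA : A.IsIrreducible)
    (hstoch : A ∈ colStochastic ℝ n) {r : n → ℝ} (hr : A *ᵥ r = r) :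
    (∀ i, 0 < r i) ∨ ∀ i, r i ≤ 0 := by
  set p : n → ℝ := fun i => max (r i) 0
  have hp : 0 ≤ p := fun i => le_max_right _ _
  -- `p ≤ A p`, and a column-stochastic `A` preserves sums, so `p` is a fixed vector too
  have hle : p ≤ A *ᵥ p := fun i => max_le
    (hr ▸ Finset.sum_le_sum fun j _ =>
      mul_le_mul_of_nonneg_left (le_max_left (r j) 0) (hA.nonneg i j))
    (Finset.sum_nonneg fun j _ => mul_nonneg (hA.nonneg i j) (hp j))
  have hfix : A *ᵥ p = p := funext fun i =>
    ((Finset.sum_eq_sum_iff_of_le fun i _ => hle i).1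
      (sum_mulVec_of_mem_colStochastic hstoch).symm i (Finset.mem_univ i)).symm
  by_cases hpos : ∃ j, 0 < p j
  · obtain ⟨j, hj⟩ := hpos
    exact .inl fun i =>
      (lt_max_iff.1 (hA.pos_of_mulVec_le hp hfix.le hj i)).resolve_right (lt_irrefl 0)
  · push Not at hpos
    exact .inr fun i => (le_max_left _ _).trans (hpos i)

theorem exists_mul_lt_mulVec_of_lt_eigenvalue [Nonempty n] (hA : ∀ i j, 0 ≤ A i j)
    {ρ τ : ℝ} {s : n → ℝ} (hs : ∀ i, 0 < s i) (hAs : A *ᵥ s = ρ • s) (hτρ : τ < ρ)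
    {x : n → ℝ} (hx : ∀ i, 0 < x i) : ∃ i, τ * x i < (A *ᵥ x) i := by
  obtain ⟨k, -, hk⟩ :=
    Finset.exists_min_image Finset.univ (fun i => x i / s i) Finset.univ_nonempty
  have hcs : (x k / s k) • s ≤ x := fun j => (le_div_iff₀ (hs j)).1 (hk j (Finset.mem_univ j))
  refine ⟨k, ?_⟩
  calc τ * x k < ρ * x k := mul_lt_mul_of_pos_right hτρ (hx k)
    _ = (A *ᵥ ((x k / s k) • s)) k := by
      rw [mulVec_smul, hAs]
      simp only [Pi.smul_apply, smul_eq_mul]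
      field_simp [(hs k).ne']
    _ ≤ (A *ᵥ x) k := Finset.sum_le_sum fun j _ => mul_le_mul_of_nonneg_left (hcs j) (hA k j)

end Matrix

section

variable {K : ℕ} {S : Matrix (Fin K) (Fin K) ℝ} {τ : ℝ}

noncomputable def Jratio (S : Matrix (Fin K) (Fin K) ℝ) (τ : ℝ) (x : Fin K → ℝ) : Fin K → ℝ :=
  fun i => τ * x i / (Sᵀ *ᵥ x) i

theorem Jfun_eq_sum (x : Fin K → ℝ) :
    Jfun S τ x = (∑ i, (Jratio S τ x i - Real.log (Jratio S τ x i))) / K := by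
  rw [Jfun, avg, avg, div_sub_div_same, Finset.sum_sub_distrib]; rfl

theorem Jratio_smul {c : ℝ} (hc : c ≠ 0) (x : Fin K → ℝ) :
    Jratio S τ (c • x) = Jratio S τ x := by
  ext i
  simp only [Jratio, mulVec_smul, Pi.smul_apply, smul_eq_mul, mul_left_comm τ c,
    mul_div_mul_left _ _ hc]

theorem Jfun_smul {c : ℝ} (hc : c ≠ 0) (x : Fin K → ℝ) : Jfun S τ (c • x) = Jfun S τ x := by
  rw [Jfun_eq_sum, Jfun_eq_sum, Jratio_smul hc]

theorem Jratio_pos (hτ : 0 < τ) {x : Fin K → ℝ} (hx : ∀ i, 0 < x i)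
    (hb : ∀ i, 0 < (Sᵀ *ᵥ x) i) (i : Fin K) : 0 < Jratio S τ x i :=
  div_pos (mul_pos hτ (hx i)) (hb i)

theorem Real.sub_log_nonneg {t : ℝ} (ht : 0 < t) : 0 ≤ t - Real.log t := by
  linarith [Real.log_le_sub_one_of_pos ht]

theorem Jfun_nonneg (hτ : 0 < τ) {x : Fin K → ℝ} (hx : ∀ i, 0 < x i)
    (hb : ∀ i, 0 < (Sᵀ *ᵥ x) i) : 0 ≤ Jfun S τ x := by
  rw [Jfun_eq_sum]
  exact div_nonneg (Finset.sum_nonneg fun i _ => Real.sub_log_nonneg (Jratio_pos hτ hx hb i))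
    K.cast_nonneg

theorem neg_log_Jratio_div_le_Jfun (hτ : 0 < τ) {x : Fin K → ℝ} (hx : ∀ i, 0 < x i)
    (hb : ∀ i, 0 < (Sᵀ *ᵥ x) i) (q : Fin K) : -Real.log (Jratio S τ x q) / K ≤ Jfun S τ x := by
  rw [Jfun_eq_sum]
  gcongr
  calc -Real.log (Jratio S τ x q) ≤ Jratio S τ x q - Real.log (Jratio S τ x q) := by
        linarith [Jratio_pos hτ hx hb q]
    _ ≤ _ := Finset.single_le_sum (f := fun i => Jratio S τ x i - Real.log (Jratio S τ x i))
        (fun i _ => Real.sub_log_nonneg (Jratio_pos hτ hx hb i)) (Finset.mem_univ q)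

theorem continuousAt_Jfun (hτ : 0 < τ) {x : Fin K → ℝ} (hx : ∀ i, 0 < x i)
    (hb : ∀ i, 0 < (Sᵀ *ᵥ x) i) : ContinuousAt (Jfun S τ) x := by
  have hr (i : Fin K) : ContinuousAt (fun y => Jratio S τ y i) x :=
    (continuous_const.mul (continuous_apply i)).continuousAt.div
      ((continuous_apply i).comp (continuous_const.matrix_mulVec continuous_id)).continuousAt
      (hb i).ne'
  simp only [funext Jfun_eq_sum]
  refine (tendsto_finsetSum _ fun i _ => ?_).div_const _
  exact (hr i).sub ((hr i).log (Jratio_pos hτ hx hb i).ne')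

theorem hasDerivAt_div_sub_log_div {a b c d : ℝ} (ha : 0 < a) (hb : 0 < b) :
    HasDerivAt (fun ε => (a + ε * c) / (b + ε * d) - Real.log ((a + ε * c) / (b + ε * d)))
      ((1 - b / a) * ((c * b - a * d) / b ^ 2)) 0 := by
  have hq : HasDerivAt (fun ε => (a + ε * c) / (b + ε * d)) ((c * b - a * d) / b ^ 2) 0 := by
    refine ((((hasDerivAt_id (0 : ℝ)).mul_const c).const_add a).fun_div
      (((hasDerivAt_id (0 : ℝ)).mul_const d).const_add b) (by simpa using hb.ne')).congr_deriv ?_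
    simp
  refine (hq.fun_sub (hq.log (by simpa using (div_pos ha hb).ne'))).congr_deriv ?_
  simp only [zero_mul, add_zero]
  field_simp

theorem hasDerivAt_Jfun_add_smul_single (hτ : 0 < τ) {x : Fin K → ℝ} (hx : ∀ i, 0 < x i)
    (hb : ∀ i, 0 < (Sᵀ *ᵥ x) i) (k : Fin K) :
    HasDerivAt (fun ε : ℝ => Jfun S τ (x + ε • Pi.single k 1))
      (((S *ᵥ ((1 - Jratio S τ x) / (Sᵀ *ᵥ x))) k - (1 - Jratio S τ x k) / x k) / K) 0 := by
  set b := Sᵀ *ᵥ x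
  set δ : Fin K → ℝ := Pi.single k 1
  have hline : (fun ε : ℝ => Jfun S τ (x + ε • δ)) = fun ε =>
      (∑ i, ((τ * x i + ε * (τ * δ i)) / (b i + ε * S k i)
        - Real.log ((τ * x i + ε * (τ * δ i)) / (b i + ε * S k i)))) / K := by
    funext ε
    have hmul : ∀ i, (Sᵀ *ᵥ (x + ε • δ)) i = b i + ε * S k i := fun i => by
      simp [δ, b, mulVec_add, mulVec_smul]
    simp only [Jfun_eq_sum, Jratio, hmul, Pi.add_apply, Pi.smul_apply, smul_eq_mul, mul_add,
      mul_left_comm τ ε]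
  rw [hline]
  refine ((HasDerivAt.fun_sum fun i _ =>
    hasDerivAt_div_sub_log_div (mul_pos hτ (hx i)) (hb i)).div_const _).congr_deriv ?_
  have hterm : ∀ i, (1 - b i / (τ * x i)) * ((τ * δ i * b i - τ * x i * S k i) / b i ^ 2)
      = S k i * ((1 - τ * x i / b i) / b i) - δ i * ((1 - τ * x i / b i) / x i) := fun i => by
    have := (hb i).ne'
    have := (hx i).ne'
    field_simp
    ring
  simp only [hterm, Finset.sum_sub_distrib]
  simp [δ, Pi.single_apply, mulVec, dotProduct, Jratio, b]

theorem mulVec_eq_of_isLocalMin_Jfun (hτ : 0 < τ) {x : Fin K → ℝ} (hx : ∀ i, 0 < x i)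
    (hb : ∀ i, 0 < (Sᵀ *ᵥ x) i) (hmin : IsLocalMin (Jfun S τ) x) :
    S *ᵥ ((1 - Jratio S τ x) / (Sᵀ *ᵥ x)) = (1 - Jratio S τ x) / x := by
  funext k
  have hline : IsLocalMin (Jfun S τ ∘ fun ε : ℝ => x + ε • Pi.single k 1) 0 :=
    IsLocalMin.comp_continuous (by simpa using hmin) (by fun_prop)
  have h := hline.hasDerivAt_eq_zero (hasDerivAt_Jfun_add_smul_single hτ hx hb k)
  rw [div_eq_zero_iff, sub_eq_zero] at h
  exact h.resolve_right (Nat.cast_ne_zero.2 k.pos.ne')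

theorem one_sub_Jratio_pos_of_mulVec_eq (hS : S.IsIrreducible) {ρ : ℝ} {s : Fin K → ℝ}
    (hs : ∀ i, 0 < s i) (hseig : Sᵀ *ᵥ s = ρ • s) (hτρ : τ < ρ) {x : Fin K → ℝ}
    (hx : ∀ i, 0 < x i)
    (hEL : S *ᵥ ((1 - Jratio S τ x) / (Sᵀ *ᵥ x)) = (1 - Jratio S τ x) / x) (i : Fin K) :
    0 < 1 - Jratio S τ x i := by
  set b := Sᵀ *ᵥ x
  set r := 1 - Jratio S τ x
  have hb : ∀ i, 0 < b i := hS.transpose.mulVec_pos hx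
  set M : Matrix (Fin K) (Fin K) ℝ := of fun k i => x k * S k i / b i
  have hM : M.IsIrreducible := hS.of_pos_imp_pos
    (fun k i => div_nonneg (mul_nonneg (hx k).le (hS.nonneg k i)) (hb i).le)
    (fun k i h => div_pos (mul_pos (hx k) h) (hb i))
  have hMstoch : M ∈ colStochastic ℝ (Fin K) := by
    refine mem_colStochastic_iff_sum.2 ⟨hM.nonneg, fun i => ?_⟩
    simp only [M, of_apply, ← Finset.sum_div]
    refine (div_eq_one_iff_eq (hb i).ne').2 ?_
    simp only [b, mulVec, dotProduct, transpose_apply, mul_comm]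
  have hMr : M *ᵥ r = r := funext fun k => by
    have h := congrFun hEL k
    simp only [mulVec, dotProduct, Pi.div_apply] at h ⊢
    simp only [M, of_apply]
    rw [eq_div_iff (hx k).ne'] at h
    rw [← h, Finset.sum_mul]
    exact Finset.sum_congr rfl fun i _ => by ring
  refine (hM.pos_or_nonpos_of_mulVec_eq hMstoch hMr).resolve_right (fun hr => ?_) i
  have : Nonempty (Fin K) := ⟨i⟩
  obtain ⟨j, hj⟩ := exists_mul_lt_mulVec_of_lt_eigenvalue hS.transpose.nonneg hs hseig hτρ hx
  have := hr j
  simp only [r, Jratio, Pi.sub_apply, Pi.one_apply, sub_nonpos] at this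
  exact (one_le_div (hb j)).1 this |>.not_gt hj

theorem dysonSol_of_mulVec_eq (hS : S.IsIrreducible) {ρ : ℝ} {s : Fin K → ℝ}
    (hs : ∀ i, 0 < s i) (hseig : Sᵀ *ᵥ s = ρ • s) (hτρ : τ < ρ) {x : Fin K → ℝ}
    (hx : ∀ i, 0 < x i)
    (hEL : S *ᵥ ((1 - Jratio S τ x) / (Sᵀ *ᵥ x)) = (1 - Jratio S τ x) / x) :
    DysonSol S τ x ((1 - Jratio S τ x) / (Sᵀ *ᵥ x)) := by
  set b := Sᵀ *ᵥ x
  set r := 1 - Jratio S τ x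
  have hb : ∀ i, 0 < b i := hS.transpose.mulVec_pos hx
  have hr : ∀ i, 0 < r i := one_sub_Jratio_pos_of_mulVec_eq hS hs hseig hτρ hx hEL
  have hrb : ∀ i, r i * b i = b i - τ * x i := fun i => by
    simp only [r, Jratio, Pi.sub_apply, Pi.one_apply]
    rw [sub_mul, div_mul_cancel₀ _ (hb i).ne', one_mul]
  have hSu : ∀ i, (S *ᵥ (r / b)) i = r i / x i := fun i => congrFun hEL i
  refine ⟨hx, fun i => div_pos (hr i) (hb i), fun i => hSu i ▸ div_pos (hr i) (hx i), hb,
    fun i => ?_, fun i => ?_⟩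
  · change 1 / x i = (S *ᵥ (r / b)) i + τ / b i
    rw [hSu]
    have := (hb i).ne'
    have := (hx i).ne'
    field_simp
    linarith [hrb i]
  · change 1 / (r i / b i) = b i + τ / (S *ᵥ (r / b)) i
    rw [hSu]
    have := (hb i).ne'
    have := (hx i).ne'
    have := (hr i).ne'
    field_simp
    linarith [hrb i]

theorem avg_smul (c : ℝ) (x : Fin K → ℝ) : avg (c • x) = c * avg x := by
  simp only [avg, Pi.smul_apply, smul_eq_mul, ← Finset.mul_sum, mul_div_assoc]

theorem avg_pos (hK : 0 < K) {x : Fin K → ℝ} (hx : ∀ i, 0 < x i) : 0 < avg x :=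
  div_pos (Finset.sum_pos (fun i _ => hx i) (Finset.univ_nonempty_iff.2 ⟨⟨0, hK⟩⟩))
    (Nat.cast_pos.2 hK)

theorem continuous_avg : Continuous (avg : (Fin K → ℝ) → ℝ) :=
  (continuous_finsetSum _ fun i _ => continuous_apply i).div_const _

theorem tendsto_Jfun_atTop (hτ : 0 < τ) (hS : S.IsIrreducible) {z : ℕ → Fin K → ℝ}
    (hz : ∀ n i, 0 < z n i) {y : Fin K → ℝ} (hzy : Tendsto z atTop (𝓝 y)) {p q : Fin K}
    (hp : 0 < y p) (hq : y q = 0) (hpq : 0 < S p q) :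
    Tendsto (fun n => Jfun S τ (z n)) atTop atTop := by
  have hb n := hS.transpose.mulVec_pos (hz n)
  have hcoord i : Tendsto (fun n => z n i) atTop (𝓝 (y i)) := tendsto_pi_nhds.1 hzy i
  -- `(Sᵀ z) q ≥ S p q * z p`, and the bound tends to `τ * y q / (S p q * y p) = 0`
  have hbound n : Jratio S τ (z n) q ≤ τ * z n q / (S p q * z n p) :=
    div_le_div_of_nonneg_left (mul_pos hτ (hz n q)).le (mul_pos hpq (hz n p))
      (apply_mul_le_mulVec hS.transpose.nonneg (fun i => (hz n i).le) q p)
  have hlim : Tendsto (fun n => τ * z n q / (S p q * z n p)) atTop (𝓝 0) := by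
    have h := ((hcoord q).const_mul τ).div ((hcoord p).const_mul (S p q)) (mul_pos hpq hp).ne'
    rwa [hq, mul_zero, zero_div] at h
  have hratio : Tendsto (fun n => Jratio S τ (z n) q) atTop (𝓝[>] 0) :=
    tendsto_nhdsWithin_iff.2 ⟨squeeze_zero (fun n => (Jratio_pos hτ (hz n) (hb n) q).le)
      hbound hlim, .of_forall fun n => Jratio_pos hτ (hz n) (hb n) q⟩
  refine tendsto_atTop_mono (fun n => neg_log_Jratio_div_le_Jfun hτ (hz n) (hb n) q) ?_
  exact (tendsto_neg_atTop_iff.2 (Real.tendsto_log_nhdsGT_zero.comp hratio)).atTop_div_const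
    (Nat.cast_pos.2 q.pos)

theorem exists_subseq_tendsto_of_tendsto_Jfun (hτ : 0 < τ) (hS : S.IsIrreducible) {a : ℝ}
    (ha : 0 < a) {z : ℕ → Fin K → ℝ} (hz : ∀ n i, 0 < z n i) (hza : ∀ n, avg (z n) = a)
    {m : ℝ} (hJ : Tendsto (fun n => Jfun S τ (z n)) atTop (𝓝 m)) :
    ∃ y : Fin K → ℝ, (∀ i, 0 < y i) ∧ avg y = a ∧ Jfun S τ y = m ∧
      ∃ φ : ℕ → ℕ, StrictMono φ ∧ Tendsto (z ∘ φ) atTop (𝓝 y) := by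
  have hK : (0 : ℝ) < K := Nat.cast_pos.2 <| Nat.pos_of_ne_zero fun h => by
    simpa [avg, h] using (hza 0).trans_gt ha
  have hsum n : ∑ i, z n i = a * K := (div_eq_iff hK.ne').1 (hza n)
  have hbox n : z n ∈ Set.Icc 0 fun _ => a * K := ⟨fun i => (hz n i).le, fun i =>
    hsum n ▸ Finset.single_le_sum (fun j _ => (hz n j).le) (Finset.mem_univ i)⟩
  obtain ⟨y, ⟨hy0, -⟩, φ, hφ, hzy⟩ := isCompact_Icc.tendsto_subseq hbox
  have hya : avg y = a :=
    tendsto_nhds_unique ((continuous_avg.tendsto y).comp hzy) (by simp [Function.comp_def, hza])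
  have hJφ := hJ.comp hφ.tendsto_atTop
  have hypos : ∀ i, 0 < y i := by
    by_contra! ⟨q, hq⟩
    obtain ⟨j, -, hj⟩ := Finset.exists_lt_of_sum_lt (s := Finset.univ) (f := fun _ => 0) (g := y)
      (by rw [Finset.sum_const_zero, (div_eq_iff hK.ne').1 hya]; exact mul_pos ha hK)
    obtain ⟨p, hp, q', hq', hpq⟩ :=
      hS.exists_mem_notMem_apply_pos (P := {i | 0 < y i}) hj (not_lt.2 hq)
    exact not_tendsto_nhds_of_tendsto_atTop (tendsto_Jfun_atTop hτ hS (fun n => hz (φ n)) hzy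
      hp (le_antisymm (not_lt.1 hq') (hy0 q')) hpq) m hJφ
  refine ⟨y, hypos, hya, tendsto_nhds_unique ?_ hJφ, φ, hφ, hzy⟩
  exact (continuousAt_Jfun hτ hypos (hS.transpose.mulVec_pos hypos)).tendsto.comp hzy

theorem isOpen_setOf_forall_pos {ι : Type*} [Finite ι] : IsOpen {x : ι → ℝ | ∀ i, 0 < x i} := by
  simpa only [Set.ofPred_forall] using
    isOpen_iInter_of_finite fun i => isOpen_lt continuous_const (continuous_apply i)

theorem exists_isMinOn_Jfun (hτ : 0 < τ) (hS : S.IsIrreducible) (hK : 0 < K) :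
    ∃ y, (∀ i, 0 < y i) ∧ IsMinOn (Jfun S τ) {x | ∀ i, 0 < x i} y := by
  set P := {x : Fin K → ℝ | ∀ i, 0 < x i}
  have hne : (Jfun S τ '' P).Nonempty :=
    ⟨_, Set.mem_image_of_mem _ (fun _ => one_pos : (1 : Fin K → ℝ) ∈ P)⟩
  have hbdd : BddBelow (Jfun S τ '' P) :=
    ⟨0, Set.forall_mem_image.2 fun x hx => Jfun_nonneg hτ hx (hS.transpose.mulVec_pos hx)⟩
  obtain ⟨u, -, hu, huJ⟩ := exists_seq_tendsto_sInf hne hbdd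
  choose x hx hxu using huJ
  have havg n := avg_pos hK (hx n)
  set z := fun n => (avg (x n))⁻¹ • x n
  have hz n i : 0 < z n i := mul_pos (inv_pos.2 (havg n)) (hx n i)
  have hza n : avg (z n) = 1 := by simp [z, avg_smul, inv_mul_cancel₀ (havg n).ne']
  have hzJ : Tendsto (fun n => Jfun S τ (z n)) atTop (𝓝 (sInf (Jfun S τ '' P))) := by
    simpa [z, Jfun_smul (inv_ne_zero (havg _).ne'), hxu] using hu
  obtain ⟨y, hy, -, hyJ, -⟩ := exists_subseq_tendsto_of_tendsto_Jfun hτ hS one_pos hz hza hzJ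
  exact ⟨y, hy, isMinOn_iff.2 fun x hx => hyJ ▸ csInf_le hbdd (Set.mem_image_of_mem _ hx)⟩

theorem tendsto_of_tendsto_Jfun_of_isMinOn (hτ : 0 < τ) (hS : S.IsIrreducible) (hK : 0 < K)
    {v : Fin K → ℝ} (hv : ∀ i, 0 < v i) (hvmin : IsMinOn (Jfun S τ) {x | ∀ i, 0 < x i} v)
    (hray : ∀ y, (∀ i, 0 < y i) → IsMinOn (Jfun S τ) {x | ∀ i, 0 < x i} y → ∃ α : ℝ, y = α • v)
    {x : ℕ → Fin K → ℝ} (hx : ∀ n i, 0 < x n i) (hxa : ∀ n, avg (x n) = avg v)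
    (hxJ : Tendsto (fun n => Jfun S τ (x n)) atTop (𝓝 (Jfun S τ v))) :
    Tendsto x atTop (𝓝 v) := by
  refine tendsto_of_subseq_tendsto fun ns hns => ?_
  obtain ⟨y, hy, hya, hyJ, φ, -, hφ⟩ := exists_subseq_tendsto_of_tendsto_Jfun hτ hS
    (avg_pos hK hv) (fun n => hx (ns n)) (fun n => hxa (ns n)) (hxJ.comp hns)
  obtain ⟨α, rfl⟩ := hray y hy (isMinOn_iff.2 fun x hx => hyJ ▸ isMinOn_iff.1 hvmin x hx)
  obtain rfl : α = 1 := by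
    rw [avg_smul] at hya
    exact (mul_eq_right₀ (avg_pos hK hv).ne').1 hya
  exact ⟨φ, by rwa [one_smul] at hφ⟩

theorem DysonSol.mem_Dtau {v w : Fin K → ℝ} (h : DysonSol S τ v w) : v ∈ Dtau S τ := by
  obtain ⟨hv, -, hSw, hSv, hv_eq, -⟩ := h
  refine ⟨hv, fun i => ?_⟩
  have h1 : τ / (Sᵀ *ᵥ v) i < 1 / v i := by linarith [hv_eq i, hSw i]
  rw [div_lt_div_iff₀ (hSv i) (hv i)] at h1
  linarith

end

theorem stmt_5_general (K : ℕ) (hK : 1 ≤ K) (S : Matrix (Fin K) (Fin K) ℝ)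
    (hS : ∀ i j, 0 ≤ S i j)
    (hirr : ∀ i j, ∃ m : ℕ, 1 ≤ m ∧ 0 < (S ^ m) i j)
    (ρ : ℝ) (s : Fin K → ℝ) (hs : ∀ i, 0 < s i) (hseig : Sᵀ.mulVec s = ρ • s)
    (τ : ℝ) (hτ0 : 0 < τ) (hτρ : τ < ρ)
    (v w : Fin K → ℝ) (hvw : DysonSol S τ v w)
    (huniq : ∀ v' w', DysonSol S τ v' w' → ∃ α : ℝ, 0 < α ∧ v' = α • v ∧ w' = α⁻¹ • w) :
    v ∈ Dtau S τ ∧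
    Jfun S τ v = sInf (Jfun S τ '' Dtau S τ) ∧
    ∀ x : ℕ → (Fin K → ℝ), (∀ n, x n ∈ Dtau S τ) → (∀ n, avg (x n) = avg v) →
      Tendsto (fun n => Jfun S τ (x n)) atTop (𝓝 (sInf (Jfun S τ '' Dtau S τ))) →
      Tendsto x atTop (𝓝 v) := by
  have hirrS : S.IsIrreducible := (isIrreducible_iff_exists_pow_pos hS).2 hirr
  have hray y (hy : ∀ i, 0 < y i) (hmin : IsMinOn (Jfun S τ) {x | ∀ i, 0 < x i} y) :
      ∃ α : ℝ, 0 < α ∧ y = α • v := by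
    have hEL := mulVec_eq_of_isLocalMin_Jfun hτ0 hy (hirrS.transpose.mulVec_pos hy)
      (hmin.isLocalMin (isOpen_setOf_forall_pos.mem_nhds hy))
    obtain ⟨α, hα, hyv, -⟩ := huniq _ _ (dysonSol_of_mulVec_eq hirrS hs hseig hτρ hy hEL)
    exact ⟨α, hα, hyv⟩
  obtain ⟨y, hy, hymin⟩ := exists_isMinOn_Jfun hτ0 hirrS hK
  obtain ⟨α, hα, rfl⟩ := hray y hy hymin
  have hvmin : IsMinOn (Jfun S τ) {x | ∀ i, 0 < x i} v :=
    isMinOn_iff.2 fun x hx => Jfun_smul hα.ne' v ▸ isMinOn_iff.1 hymin x hx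
  have hvD := hvw.mem_Dtau
  have hinf : sInf (Jfun S τ '' Dtau S τ) = Jfun S τ v :=
    IsLeast.csInf_eq ⟨Set.mem_image_of_mem _ hvD,
      Set.forall_mem_image.2 fun x hx => isMinOn_iff.1 hvmin x hx.1⟩
  refine ⟨hvD, hinf.symm, fun x hxD hxa hxJ => ?_⟩
  exact tendsto_of_tendsto_Jfun_of_isMinOn hτ0 hirrS hK hvw.1 hvmin
    (fun y hy hmin => (hray y hy hmin).imp fun _ => And.right) (fun n => (hxD n).1) hxa
    (hinf ▸ hxJ)

/-- Variational problem for `v`. Let `S` be irreducible nonnegative,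
`0 < τ < ρ(S)` (with `ρ(S)` the Perron–Frobenius eigenvalue, here characterized by a positive
eigenvector `s` of `Sᵗ`), and let `(v, w)` be an entrywise positive solution of the Dyson
equation with `⟨v⟩ = ⟨w⟩`; assume every positive solution at the same `τ` equals
`(α v, α⁻¹ w)` for some `α > 0`. Then `v ∈ D_τ`, `J(v) = inf_{D_τ} J`, and every minimizing
sequence in `D_τ` with averages `⟨x⁽ⁿ⁾⟩ = ⟨v⟩` converges to `v`. -/
theorem stmt_5 (K : ℕ) (hK : 1 ≤ K) (S : Matrix (Fin K) (Fin K) ℝ)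
    (hS : ∀ i j, 0 ≤ S i j)
    (hirr : ∀ i j, ∃ m : ℕ, 1 ≤ m ∧ 0 < (S ^ m) i j)
    (ρ : ℝ) (s : Fin K → ℝ) (hs : ∀ i, 0 < s i) (hseig : Sᵀ.mulVec s = ρ • s)
    (τ : ℝ) (hτ0 : 0 < τ) (hτρ : τ < ρ)
    (v w : Fin K → ℝ) (hvw : DysonSol S τ v w) (havg : avg v = avg w)
    (huniq : ∀ v' w', DysonSol S τ v' w' → ∃ α : ℝ, 0 < α ∧ v' = α • v ∧ w' = α⁻¹ • w) :
    v ∈ Dtau S τ ∧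
    Jfun S τ v = sInf (Jfun S τ '' Dtau S τ) ∧
    ∀ x : ℕ → (Fin K → ℝ), (∀ n, x n ∈ Dtau S τ) → (∀ n, avg (x n) = avg v) →
      Tendsto (fun n => Jfun S τ (x n)) atTop (𝓝 (sInf (Jfun S τ '' Dtau S τ))) →
      Tendsto x atTop (𝓝 v) :=
  stmt_5_general K hK S hS hirr ρ s hs hseig τ hτ0 hτρ v w hvw huniq
end

section
/- Let S ∈ ℝ^{K×K} be irreducible with nonnegative entries and Perron–Frobenius eigenvalue ρ := ρ(S) > 0, let 0 < τ < ρ, and let s ∈ ℝ^K be an entrywise positive vector with Sᵗs = ρ s. Then s ∈ D_τ and J(s) = τ/ρ − log(τ/ρ). Consequently, if v ∈ D_τ satisfies J(v) ≤ τ/ρ − log(τ/ρ), then (Sᵗv)_i ≤ e·ρ·(τ/ρ)^{1−K}·v_i for every i. -/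
open Matrix

open Real

/-! The eigenvector `s` makes every ratio `τ sᵢ / (Sᵗs)ᵢ` equal to `t := τ/ρ`. For `v ∈ D_τ` the
ratios `wⱼ = τ vⱼ / (Sᵗv)ⱼ` are positive and `J(v)` is the average of `wⱼ - log wⱼ ≥ 1`; so if
`J(v) ≤ t - log t`, a single term obeys `wᵢ - log wᵢ ≤ K (t - log t) - (K - 1)`. Hence
`log (1/wᵢ) ≤ 1 - K log t` because `t < 1`, that is `(Sᵗv)ᵢ ≤ e t^{-K} τ vᵢ = e ρ t^{1-K} vᵢ`. -/

theorem add_card_sub_one_mul_le_sum {ι R : Type*} [Fintype ι] [CommRing R] [LinearOrder R]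
    [IsStrictOrderedRing R] {f : ι → R} {a : R} (h : ∀ j, a ≤ f j) (i : ι) :
    f i + (Fintype.card ι - 1) * a ≤ ∑ j, f j := by
  have hi : f i - a ≤ ∑ j, (f j - a) :=
    Finset.single_le_sum (fun j _ => sub_nonneg.2 (h j)) (Finset.mem_univ i)
  rw [Finset.sum_sub_distrib, Finset.sum_const, Finset.card_univ, nsmul_eq_mul] at hi
  linarith

theorem one_le_sub_log {x : ℝ} (hx : 0 < x) : 1 ≤ x - log x := by
  linarith [log_le_sub_one_of_pos hx]

theorem avg_const {K : ℕ} (hK : K ≠ 0) (c : ℝ) : avg (fun _ : Fin K => c) = c := by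
  simp [avg, hK]

theorem exp_card_mul_sub_log_le {t : ℝ} (ht0 : 0 < t) (ht1 : t ≤ 1) (K : ℕ) :
    exp (K * (t - log t) - (K - 1)) ≤ exp 1 * t ^ (-(K : ℤ)) := by
  rw [← exp_log (zpow_pos ht0 _), ← exp_add, exp_le_exp, log_zpow]
  push_cast
  nlinarith

section

variable {K : ℕ} {S : Matrix (Fin K) (Fin K) ℝ} {τ ρ : ℝ}

theorem mem_Dtau_of_mulVec_eq_smul {s : Fin K → ℝ} (hs : ∀ i, 0 < s i)
    (hseig : Sᵀ *ᵥ s = ρ • s) (hτρ : τ < ρ) : s ∈ Dtau S τ :=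
  ⟨hs, fun i => by simpa [hseig] using mul_lt_mul_of_pos_right hτρ (hs i)⟩

theorem Jfun_of_mulVec_eq_smul (hK : K ≠ 0) {s : Fin K → ℝ} (hs : ∀ i, s i ≠ 0)
    (hseig : Sᵀ *ᵥ s = ρ • s) : Jfun S τ s = τ / ρ - log (τ / ρ) := by
  have hratio : ∀ i, τ * s i / (Sᵀ *ᵥ s) i = τ / ρ := fun i => by
    rw [hseig, Pi.smul_apply, smul_eq_mul, mul_div_mul_right _ _ (hs i)]
  simp only [Jfun, hratio, avg_const hK]

theorem log_mulVec_div_le_of_Jfun_le (hτ : 0 < τ) {v : Fin K → ℝ} (hv : v ∈ Dtau S τ) {c : ℝ}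
    (hJ : Jfun S τ v ≤ c) (i : Fin K) : log ((Sᵀ *ᵥ v) i / (τ * v i)) ≤ K * c - (K - 1) := by
  set w : Fin K → ℝ := fun j => τ * v j / (Sᵀ *ᵥ v) j
  have hw : ∀ j, 0 < w j := fun j =>
    div_pos (mul_pos hτ (hv.1 j)) ((mul_pos hτ (hv.1 j)).trans (hv.2 j))
  have hK : (0 : ℝ) < K := by exact_mod_cast i.pos
  have hsum : ∑ j, (w j - log (w j)) ≤ K * c := by
    have : Jfun S τ v = (∑ j, (w j - log (w j))) / K := by
      simp only [Jfun, avg, Finset.sum_sub_distrib, sub_div, w]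
    rwa [this, div_le_iff₀ hK, mul_comm] at hJ
  have hi := add_card_sub_one_mul_le_sum (fun j => one_le_sub_log (hw j)) i
  rw [Fintype.card_fin, mul_one] at hi
  rw [← inv_div, log_inv]
  linarith [hw i]

end

theorem stmt_6_general (K : ℕ) (hK : 1 ≤ K) (S : Matrix (Fin K) (Fin K) ℝ)
    (ρ : ℝ) (hρ : 0 < ρ) (s : Fin K → ℝ) (hs : ∀ i, 0 < s i)
    (hseig : Sᵀ.mulVec s = ρ • s)
    (τ : ℝ) (hτ0 : 0 < τ) (hτρ : τ < ρ) :
    s ∈ Dtau S τ ∧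
    Jfun S τ s = τ / ρ - Real.log (τ / ρ) ∧
    ∀ v ∈ Dtau S τ, Jfun S τ v ≤ τ / ρ - Real.log (τ / ρ) →
      ∀ i, Sᵀ.mulVec v i ≤ Real.exp 1 * ρ * (τ / ρ) ^ ((1 : ℤ) - (K : ℤ)) * v i := by
  refine ⟨mem_Dtau_of_mulVec_eq_smul hs hseig hτρ,
    Jfun_of_mulVec_eq_smul (by omega) (fun i => (hs i).ne') hseig, fun v hv hJ i => ?_⟩
  have ht : 0 < τ / ρ := div_pos hτ0 hρ
  have hτv : 0 < τ * v i := mul_pos hτ0 (hv.1 i)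
  have hratio : (Sᵀ *ᵥ v) i / (τ * v i) ≤ exp 1 * (τ / ρ) ^ (-(K : ℤ)) :=
    calc (Sᵀ *ᵥ v) i / (τ * v i) ≤ exp (K * (τ / ρ - log (τ / ρ)) - (K - 1)) :=
          (log_le_iff_le_exp (div_pos (hτv.trans (hv.2 i)) hτv)).1
            (log_mulVec_div_le_of_Jfun_le hτ0 hv hJ i)
      _ ≤ exp 1 * (τ / ρ) ^ (-(K : ℤ)) :=
          exp_card_mul_sub_log_le ht ((div_lt_one hρ).2 hτρ).le K
  calc (Sᵀ *ᵥ v) i ≤ exp 1 * (τ / ρ) ^ (-(K : ℤ)) * (τ * v i) := (div_le_iff₀ hτv).1 hratio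
    _ = exp 1 * ρ * (τ / ρ) ^ ((1 : ℤ) - K) * v i := by
      rw [zpow_sub₀ ht.ne', zpow_one, _root_.zpow_neg]
      field_simp

/-- Let `S` be irreducible nonnegative with Perron–Frobenius eigenvalue
`ρ > 0`, `0 < τ < ρ`, and `s` a positive vector with `Sᵗs = ρ s`. Then `s ∈ D_τ` and
`J(s) = τ/ρ − log(τ/ρ)`. Consequently, if `v ∈ D_τ` satisfies `J(v) ≤ τ/ρ − log(τ/ρ)`, then
`(Sᵗv)_i ≤ e·ρ·(τ/ρ)^{1−K}·v_i` for every `i`. -/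
theorem stmt_6 (K : ℕ) (hK : 1 ≤ K) (S : Matrix (Fin K) (Fin K) ℝ)
    (hS : ∀ i j, 0 ≤ S i j)
    (hirr : ∀ i j, ∃ m : ℕ, 1 ≤ m ∧ 0 < (S ^ m) i j)
    (ρ : ℝ) (hρ : 0 < ρ) (s : Fin K → ℝ) (hs : ∀ i, 0 < s i)
    (hseig : Sᵀ.mulVec s = ρ • s)
    (τ : ℝ) (hτ0 : 0 < τ) (hτρ : τ < ρ) :
    s ∈ Dtau S τ ∧
    Jfun S τ s = τ / ρ - Real.log (τ / ρ) ∧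
    ∀ v ∈ Dtau S τ, Jfun S τ v ≤ τ / ρ - Real.log (τ / ρ) →
      ∀ i, Sᵀ.mulVec v i ≤ Real.exp 1 * ρ * (τ / ρ) ^ ((1 : ℤ) - (K : ℤ)) * v i :=
  stmt_6_general K hK S ρ hρ s hs hseig τ hτ0 hτρ
end

section
/- Let S ∈ ℝ^{K×K} be irreducible with nonnegative entries, let τ > 0 and m > 0. If (x⁽ⁿ⁾)_{n∈ℕ} is a sequence in D_τ := {x ∈ ℝ^K : 0 < x and τ x < Sᵗx entrywise} with ⟨x⁽ⁿ⁾⟩ = m for all n and sup_n J(x⁽ⁿ⁾) < ∞, then inf_{n} min_{i} x⁽ⁿ⁾_i > 0. -/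
open Matrix

lemma pow_entry_nonneg {K : ℕ} (S : Matrix (Fin K) (Fin K) ℝ) (hS : ∀ i j, 0 ≤ S i j) :
    ∀ p i j, 0 ≤ (S ^ p) i j := by
  intro p
  induction p with
  | zero =>
    intro i j
    simp only [pow_zero, Matrix.one_apply]
    split_ifs <;> norm_num
  | succ p ih =>
    intro i j
    rw [pow_succ, Matrix.mul_apply]
    exact Finset.sum_nonneg fun k _ => mul_nonneg (ih i k) (hS k j)

lemma iterate_bound {K : ℕ} (S : Matrix (Fin K) (Fin K) ℝ) (hS : ∀ i j, 0 ≤ S i j)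
    (c : ℝ) (hc : 0 ≤ c) (x : Fin K → ℝ)
    (h : ∀ i, c * Sᵀ.mulVec x i ≤ x i) :
    ∀ p i, c ^ p * ((Sᵀ ^ p).mulVec x) i ≤ x i := by
  intro p
  induction p with
  | zero =>
    intro i
    simp [Matrix.one_mulVec]
  | succ p ih =>
    intro i
    have hy : (Sᵀ ^ (p + 1)).mulVec x = Sᵀ.mulVec ((Sᵀ ^ p).mulVec x) := by
      rw [pow_succ' Sᵀ, ← Matrix.mulVec_mulVec]
    have key : c ^ p * (Sᵀ.mulVec ((Sᵀ ^ p).mulVec x)) i ≤ Sᵀ.mulVec x i := by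
      set y := (Sᵀ ^ p).mulVec x with hydef
      rw [Matrix.mulVec, Matrix.mulVec, dotProduct, dotProduct,
        Finset.mul_sum]
      apply Finset.sum_le_sum
      intro j _
      rw [mul_left_comm]
      have hSji : 0 ≤ Sᵀ i j := hS j i
      exact mul_le_mul_of_nonneg_left (ih j) hSji
    calc c ^ (p + 1) * ((Sᵀ ^ (p + 1)).mulVec x) i
        = c * (c ^ p * (Sᵀ.mulVec ((Sᵀ ^ p).mulVec x)) i) := by rw [hy, pow_succ]; ring
      _ ≤ c * Sᵀ.mulVec x i := mul_le_mul_of_nonneg_left key hc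
      _ ≤ x i := h i

/-- Let `S` be irreducible nonnegative, `τ > 0`, `m > 0`. If `(x⁽ⁿ⁾)` is a
sequence in `D_τ` with `⟨x⁽ⁿ⁾⟩ = m` for all `n` and `sup_n J(x⁽ⁿ⁾) < ∞`, then
`inf_n min_i x⁽ⁿ⁾_i > 0`. -/
theorem stmt_7 (K : ℕ) (hK : 1 ≤ K) (S : Matrix (Fin K) (Fin K) ℝ)
    (hS : ∀ i j, 0 ≤ S i j)
    (hirr : ∀ i j, ∃ m : ℕ, 1 ≤ m ∧ 0 < (S ^ m) i j)
    (τ : ℝ) (hτ : 0 < τ) (m : ℝ) (hm : 0 < m)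
    (x : ℕ → (Fin K → ℝ)) (hx : ∀ n, x n ∈ Dtau S τ)
    (hxavg : ∀ n, avg (x n) = m)
    (hJ : ∃ M : ℝ, ∀ n, Jfun S τ (x n) ≤ M) :
    ∃ ε : ℝ, 0 < ε ∧ ∀ n i, ε ≤ x n i := by
  obtain ⟨M, hM⟩ := hJ
  choose P hP1 hP2 using hirr
  have hKpos : (0 : ℝ) < K := by exact_mod_cast hK
  haveI : NeZero K := ⟨Nat.one_le_iff_ne_zero.mp hK⟩
  set c : ℝ := Real.exp (-(K * M)) / τ with hcdef
  have hcpos : 0 < c := div_pos (Real.exp_pos _) hτ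
  -- Step 1: the uniform contraction inequality c * Sᵀx ≤ x
  have hstep : ∀ n i, c * Sᵀ.mulVec (x n) i ≤ x n i := by
    intro n i
    obtain ⟨hpos, hlt⟩ := hx n
    have hD : ∀ j, 0 < Sᵀ.mulVec (x n) j := fun j =>
      lt_trans (mul_pos hτ (hpos j)) (hlt j)
    set r : Fin K → ℝ := fun j => τ * x n j / Sᵀ.mulVec (x n) j with hrdef
    have hrpos : ∀ j, 0 < r j := fun j => div_pos (mul_pos hτ (hpos j)) (hD j)
    have hsum : ∑ j, (r j - Real.log (r j)) ≤ K * M := by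
      have hJn := hM n
      rw [Jfun, avg, avg, div_sub_div_same, ← Finset.sum_sub_distrib] at hJn
      have := (div_le_iff₀ hKpos).mp hJn
      linarith [this]
    have hone : ∀ j, 1 ≤ r j - Real.log (r j) := by
      intro j
      have := Real.log_le_sub_one_of_pos (hrpos j)
      linarith
    have hterm : r i - Real.log (r i) ≤ K * M := by
      have h1 : r i - Real.log (r i) ≤ ∑ j, (r j - Real.log (r j)) :=
        Finset.single_le_sum (fun j _ => le_trans zero_le_one (hone j))
          (Finset.mem_univ i)
      linarith
    have hlog : -(K * M) ≤ Real.log (r i) := by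
      have := (hrpos i).le
      linarith
    have hri : Real.exp (-(K * M)) ≤ r i := by
      calc Real.exp (-(K * M)) ≤ Real.exp (Real.log (r i)) := Real.exp_le_exp.mpr hlog
        _ = r i := Real.exp_log (hrpos i)
    -- from exp(-(K*M)) ≤ τ x i / D, conclude c * D ≤ x i
    have h1 : Real.exp (-(K * M)) * Sᵀ.mulVec (x n) i ≤ τ * x n i :=
      (le_div_iff₀ (hD i)).mp hri
    rw [hcdef, div_mul_eq_mul_div, div_le_iff₀ hτ]
    linarith [h1]
  -- Step 2: iterate to get entrywise bounds through powers of S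
  have hiter : ∀ n i j, c ^ P j i * (S ^ P j i) j i * x n j ≤ x n i := by
    intro n i j
    obtain ⟨hpos, _⟩ := hx n
    have hy := iterate_bound S hS c hcpos.le (x n) (hstep n) (P j i) i
    have hmv : (Sᵀ ^ P j i) i j * x n j ≤ ((Sᵀ ^ P j i).mulVec (x n)) i := by
      rw [Matrix.mulVec, dotProduct]
      apply Finset.single_le_sum (f := fun k => (Sᵀ ^ P j i) i k * x n k)
        (fun k _ => ?_) (Finset.mem_univ j)
      have : 0 ≤ (Sᵀ ^ P j i) i k := by
        rw [← Matrix.transpose_pow, Matrix.transpose_apply]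
        exact pow_entry_nonneg S hS _ k i
      exact mul_nonneg this (hpos k).le
    have h2 : (Sᵀ ^ P j i) i j = (S ^ P j i) j i := by
      rw [← Matrix.transpose_pow, Matrix.transpose_apply]
    calc c ^ P j i * (S ^ P j i) j i * x n j
        = c ^ P j i * ((Sᵀ ^ P j i) i j * x n j) := by rw [h2]; ring
      _ ≤ c ^ P j i * ((Sᵀ ^ P j i).mulVec (x n)) i :=
          mul_le_mul_of_nonneg_left hmv (pow_nonneg hcpos.le _)
      _ ≤ x n i := hy
  -- Step 3: some coordinate is ≥ m
  have hmax : ∀ n, ∃ j, m ≤ x n j := by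
    intro n
    have hsum : ∑ j, x n j = K * m := by
      have := hxavg n
      rw [avg] at this
      field_simp at this
      linarith [this]
    by_contra hcon
    push_neg at hcon
    have : ∑ j, x n j < ∑ _j : Fin K, m :=
      Finset.sum_lt_sum_of_nonempty Finset.univ_nonempty fun j _ => hcon j
    rw [Finset.sum_const, Finset.card_univ, Fintype.card_fin, nsmul_eq_mul] at this
    linarith [hsum, this]
  -- Step 4: assemble ε
  set F : Fin K × Fin K → ℝ := fun p => c ^ P p.1 p.2 * (S ^ P p.1 p.2) p.1 p.2 with hF
  have hne : (Finset.univ : Finset (Fin K × Fin K)).Nonempty := Finset.univ_nonempty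
  set δ : ℝ := Finset.univ.inf' hne F with hδ
  have hδpos : 0 < δ := by
    rw [hδ, Finset.lt_inf'_iff]
    intro p _
    exact mul_pos (pow_pos hcpos _) (hP2 p.1 p.2)
  refine ⟨m * δ, mul_pos hm hδpos, ?_⟩
  intro n i
  obtain ⟨j, hj⟩ := hmax n
  obtain ⟨hpos, _⟩ := hx n
  have hFle : δ ≤ F (j, i) := Finset.inf'_le F (Finset.mem_univ (j, i))
  calc m * δ ≤ x n j * F (j, i) :=
        mul_le_mul hj hFle hδpos.le (hpos j).le
    _ = c ^ P j i * (S ^ P j i) j i * x n j := by rw [hF]; ring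
    _ ≤ x n i := hiter n i j
end

section
/- Let V be a finite set, E⊲, E≺ ⊆ V×V directed edge sets, E := E⊲ ∪ E≺, and suppose every vertex of V has at least one incoming and at least one outgoing edge in E. Let f : V → ℝ satisfy the min-max equation at every vertex. Define the weight of an edge e = (l,k) ∈ E by w_e := f(k) − f(l) if e ∈ E⊲ and w_e := f(k) − f(l) + 1 if e ∈ E≺ ∖ E⊲. Then for every edge (l,k) ∈ E there exists an edge (k,p) ∈ E with w_{(l,k)} ≥ w_{(k,p)}. -/
open scoped Classical

/-- The maximum `max{ max{f l : (l,k) ∈ E⊲}, max{f l − 1 : (l,k) ∈ E≺} }` over incoming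
edges at `k` (maxima over empty index sets are omitted), realized as the supremum of the
(finite, nonempty) union of the two value sets. -/
noncomputable def maxIn {V : Type*} (Ea Ep : V → V → Prop) (f : V → ℝ) (k : V) : ℝ :=
  sSup ({x | ∃ l, Ea l k ∧ x = f l} ∪ {x | ∃ l, Ep l k ∧ x = f l - 1})

/-- The minimum `min{ min{f l : (k,l) ∈ E⊲}, min{f l + 1 : (k,l) ∈ E≺} }` over outgoing
edges at `k` (minima over empty index sets are omitted), realized as the infimum of the
(finite, nonempty) union of the two value sets. -/
noncomputable def minOut {V : Type*} (Ea Ep : V → V → Prop) (f : V → ℝ) (k : V) : ℝ :=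
  sInf ({x | ∃ l, Ea k l ∧ x = f l} ∪ {x | ∃ l, Ep k l ∧ x = f l + 1})

/-- The weight of an edge `e = (l,k) ∈ E⊲ ∪ E≺`: `f k − f l` if `e ∈ E⊲` and
`f k − f l + 1` if `e ∈ E≺ ∖ E⊲`. -/
noncomputable def edgeWeight {V : Type*} (Ea : V → V → Prop) (f : V → ℝ) (l k : V) : ℝ :=
  if Ea l k then f k - f l else f k - f l + 1

/-- Let `V` be finite with directed edge sets `E⊲`, `E≺`, every vertex
having an incoming and an outgoing edge in `E = E⊲ ∪ E≺`, and let `f : V → ℝ` satisfy the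
min-max equation at every vertex. Then for every edge `(l,k) ∈ E` there is an edge
`(k,p) ∈ E` with `w_{(l,k)} ≥ w_{(k,p)}`. -/
theorem stmt_14 (V : Type*) [Fintype V] (Ea Ep : V → V → Prop)
    (hin : ∀ k, ∃ l, Ea l k ∨ Ep l k) (hout : ∀ k, ∃ l, Ea k l ∨ Ep k l)
    (f : V → ℝ)
    (hf : ∀ k, f k = (maxIn Ea Ep f k + minOut Ea Ep f k) / 2) :
    ∀ l k, Ea l k ∨ Ep l k →
      ∃ p, (Ea k p ∨ Ep k p) ∧ edgeWeight Ea f k p ≤ edgeWeight Ea f l k := by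
  intro l k hlk
  set Sin : Set ℝ := {x | ∃ l, Ea l k ∧ x = f l} ∪ {x | ∃ l, Ep l k ∧ x = f l - 1} with hSin
  set Sout : Set ℝ := {x | ∃ l, Ea k l ∧ x = f l} ∪ {x | ∃ l, Ep k l ∧ x = f l + 1} with hSout
  have hfinIn : Sin.Finite := by
    apply Set.Finite.subset ((Set.finite_range f).union (Set.finite_range fun v => f v - 1))
    rintro x (⟨a, _, rfl⟩ | ⟨a, _, rfl⟩)
    · exact Or.inl ⟨a, rfl⟩
    · exact Or.inr ⟨a, rfl⟩
  have hfinOut : Sout.Finite := by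
    apply Set.Finite.subset ((Set.finite_range f).union (Set.finite_range fun v => f v + 1))
    rintro x (⟨a, _, rfl⟩ | ⟨a, _, rfl⟩)
    · exact Or.inl ⟨a, rfl⟩
    · exact Or.inr ⟨a, rfl⟩
  have hneOut : Sout.Nonempty := by
    obtain ⟨p, hp | hp⟩ := hout k
    · exact ⟨f p, Or.inl ⟨p, hp, rfl⟩⟩
    · exact ⟨f p + 1, Or.inr ⟨p, hp, rfl⟩⟩
  -- the incoming-edge weight is at least f k - maxIn
  have hbound : f k - maxIn Ea Ep f k ≤ edgeWeight Ea f l k := by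
    rcases Classical.em (Ea l k) with h | h
    · have : f l ≤ maxIn Ea Ep f k :=
        le_csSup hfinIn.bddAbove (Or.inl ⟨l, h, rfl⟩)
      simp only [edgeWeight, if_pos h]
      linarith
    · have hp : Ep l k := hlk.resolve_left h
      have : f l - 1 ≤ maxIn Ea Ep f k :=
        le_csSup hfinIn.bddAbove (Or.inr ⟨l, hp, rfl⟩)
      simp only [edgeWeight, if_neg h]
      linarith
  -- the infimum of outgoing values is attained
  have hmem : minOut Ea Ep f k ∈ Sout := hneOut.csInf_mem hfinOut
  have hkey : minOut Ea Ep f k - f k = f k - maxIn Ea Ep f k := by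
    have := hf k; linarith
  rcases hmem with ⟨p, hp, hpe⟩ | ⟨p, hp, hpe⟩
  · refine ⟨p, Or.inl hp, ?_⟩
    have : edgeWeight Ea f k p = f p - f k := by simp [edgeWeight, if_pos hp]
    rw [this]
    calc f p - f k = f k - maxIn Ea Ep f k := by rw [← hkey, ← hpe]
    _ ≤ _ := hbound
  · refine ⟨p, Or.inr hp, ?_⟩
    have hle : edgeWeight Ea f k p ≤ f p + 1 - f k := by
      unfold edgeWeight
      split <;> linarith
    calc edgeWeight Ea f k p ≤ f p + 1 - f k := hle
    _ = f k - maxIn Ea Ep f k := by rw [← hkey, ← hpe]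
    _ ≤ _ := hbound
end

section
/- Let V = {1,…,L}, let E⊲ ⊆ {(l,k) ∈ V×V : l < k} be nonempty, let E≺ ⊆ V×V, and suppose the directed graph (V, E⊲ ∪ E≺) is strongly connected. Let f : V → ℝ satisfy the min-max equation at every vertex, and define edge weights w_e := f(k) − f(l) for e = (l,k) ∈ E⊲ and w_e := f(k) − f(l) + 1 for e = (l,k) ∈ E≺ ∖ E⊲. Define κ := min over all cycles γ of ⟨γ⟩/|γ|, where |γ| is the number of edges of γ and ⟨γ⟩ the number of edges of γ in E≺ ∖ E⊲; δ := min{f(k) − f(l) : (l,k) ∈ E⊲}; and δ̂ := min{w_e : e ∈ E⊲ ∪ E≺}. Then κ = δ = δ̂. -/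
open scoped Classical

/-- A cycle of length `ℓ ≥ 1` in the directed graph with edge relation `E`. -/
def IsCycle {L : ℕ} (E : Fin L → Fin L → Prop) (ℓ : ℕ) (γ : ℕ → Fin L) : Prop :=
  1 ≤ ℓ ∧ γ ℓ = γ 0 ∧ ∀ t < ℓ, E (γ t) (γ (t + 1))

/-- `⟨γ⟩`: the number of edges of the path `γ` (of length `ℓ`) lying in `E≺ ∖ E⊲`. -/
noncomputable def precCount {L : ℕ} (Ea Ep : Fin L → Fin L → Prop) (ℓ : ℕ)
    (γ : ℕ → Fin L) : ℕ :=
  ((Finset.range ℓ).filter fun t =>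
    Ep (γ t) (γ (t + 1)) ∧ ¬ Ea (γ t) (γ (t + 1))).card

/-- The set of ratios `⟨γ⟩/|γ|` over all cycles `γ` of the graph with edges `E⊲ ∪ E≺`. -/
def ratioSet {L : ℕ} (Ea Ep : Fin L → Fin L → Prop) : Set ℝ :=
  {r | ∃ (ℓ : ℕ) (γ : ℕ → Fin L),
    IsCycle (fun a b => Ea a b ∨ Ep a b) ℓ γ ∧ r = (precCount Ea Ep ℓ γ : ℝ) / ℓ}

lemma fin_ex1 {α : Type*} [Finite α] (P : α → Prop) (g : α → ℝ) :
    {x : ℝ | ∃ l, P l ∧ x = g l}.Finite := by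
  have h : {x : ℝ | ∃ l, P l ∧ x = g l} ⊆ Set.range g := by
    rintro x ⟨l, _, rfl⟩; exact ⟨l, rfl⟩
  exact (Set.finite_range g).subset h

lemma fin_ex2 {α : Type*} [Finite α] (P : α → α → Prop) (g : α → α → ℝ) :
    {x : ℝ | ∃ l k, P l k ∧ x = g l k}.Finite := by
  have h : {x : ℝ | ∃ l k, P l k ∧ x = g l k} ⊆ Set.range (fun p : α × α => g p.1 p.2) := by
    rintro x ⟨l, k, _, rfl⟩; exact ⟨(l, k), rfl⟩
  exact (Set.finite_range _).subset h

lemma sum_edgeWeight {L : ℕ} (Ea Ep : Fin L → Fin L → Prop) (f : Fin L → ℝ)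
    (ℓ : ℕ) (γ : ℕ → Fin L)
    (hE : ∀ t < ℓ, Ea (γ t) (γ (t+1)) ∨ Ep (γ t) (γ (t+1))) :
    ∑ t ∈ Finset.range ℓ, edgeWeight Ea f (γ t) (γ (t+1))
      = f (γ ℓ) - f (γ 0) + precCount Ea Ep ℓ γ := by
  have h : ∀ t ∈ Finset.range ℓ, edgeWeight Ea f (γ t) (γ (t+1))
      = (f (γ (t+1)) - f (γ t))
        + (if Ep (γ t) (γ (t+1)) ∧ ¬ Ea (γ t) (γ (t+1)) then (1:ℝ) else 0) := by
    intro t ht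
    rw [Finset.mem_range] at ht
    rcases hE t ht with hA | hP
    · simp [edgeWeight, hA]
    · by_cases hA : Ea (γ t) (γ (t+1)) <;> simp [edgeWeight, hA, hP]
  rw [Finset.sum_congr rfl h, Finset.sum_add_distrib,
    Finset.sum_range_sub (fun t => f (γ t)), Finset.sum_boole, precCount]


/-- Let `V = {1,…,L}`, `E⊲ ⊆ {(l,k) : l < k}` nonempty, `E≺ ⊆ V×V`, with
`(V, E⊲ ∪ E≺)` strongly connected, and let `f` satisfy the min-max equation at every vertex.
With `κ := min_γ ⟨γ⟩/|γ|` over all cycles, `δ := min{f k − f l : (l,k) ∈ E⊲}` and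
`δ̂ := min{w_e : e ∈ E⊲ ∪ E≺}`, one has `κ = δ = δ̂` (in particular the minimum `κ` over the
set of cycle ratios is attained at `δ`). -/
theorem stmt_15 (L : ℕ) (hL : 1 ≤ L) (Ea Ep : Fin L → Fin L → Prop)
    (hEa_lt : ∀ l k, Ea l k → l < k)
    (hEa_ne : ∃ l k, Ea l k)
    (hconn : ∀ l k : Fin L, ∃ ℓ : ℕ, 1 ≤ ℓ ∧ ∃ γ : ℕ → Fin L, γ 0 = l ∧ γ ℓ = k ∧
      ∀ t < ℓ, Ea (γ t) (γ (t + 1)) ∨ Ep (γ t) (γ (t + 1)))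
    (f : Fin L → ℝ)
    (hf : ∀ k, f k = (maxIn Ea Ep f k + minOut Ea Ep f k) / 2) :
    IsLeast (ratioSet Ea Ep) (sInf {x : ℝ | ∃ l k, Ea l k ∧ x = f k - f l}) ∧
    sInf {x : ℝ | ∃ l k, Ea l k ∧ x = f k - f l}
      = sInf {x : ℝ | ∃ l k, (Ea l k ∨ Ep l k) ∧ x = edgeWeight Ea f l k} := by
  classical
  haveI : Nonempty (Fin L) := ⟨⟨0, by omega⟩⟩
  -- every vertex has outgoing and incoming edges
  have hout : ∀ k : Fin L, ∃ m, Ea k m ∨ Ep k m := by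
    intro k
    obtain ⟨ℓ, hℓ, γ, h0, hℓk, hE⟩ := hconn k k
    exact ⟨γ 1, by have := hE 0 hℓ; rwa [h0] at this⟩
  have hin : ∀ k : Fin L, ∃ m, Ea m k ∨ Ep m k := by
    intro k
    obtain ⟨ℓ, hℓ, γ, h0, hℓk, hE⟩ := hconn k k
    refine ⟨γ (ℓ - 1), ?_⟩
    have h1 : ℓ - 1 < ℓ := by omega
    have h2 : ℓ - 1 + 1 = ℓ := by omega
    have := hE (ℓ - 1) h1
    rwa [h2, hℓk] at this
  -- basic facts about maxIn / minOut
  have hInF : ∀ k : Fin L, ({x : ℝ | ∃ l, Ea l k ∧ x = f l}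
      ∪ {x : ℝ | ∃ l, Ep l k ∧ x = f l - 1}).Finite :=
    fun k => (fin_ex1 _ _).union (fin_ex1 _ _)
  have hOutF : ∀ k : Fin L, ({x : ℝ | ∃ l, Ea k l ∧ x = f l}
      ∪ {x : ℝ | ∃ l, Ep k l ∧ x = f l + 1}).Finite :=
    fun k => (fin_ex1 _ _).union (fin_ex1 _ _)
  have hOutN : ∀ k : Fin L, ({x : ℝ | ∃ l, Ea k l ∧ x = f l}
      ∪ {x : ℝ | ∃ l, Ep k l ∧ x = f l + 1}).Nonempty := by
    intro k
    obtain ⟨m, hm | hm⟩ := hout k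
    · exact ⟨f m, Or.inl ⟨m, hm, rfl⟩⟩
    · exact ⟨f m + 1, Or.inr ⟨m, hm, rfl⟩⟩
  have hmaxUB : ∀ (k : Fin L) (x : ℝ), x ∈ ({x : ℝ | ∃ l, Ea l k ∧ x = f l}
      ∪ {x : ℝ | ∃ l, Ep l k ∧ x = f l - 1}) → x ≤ maxIn Ea Ep f k :=
    fun k x hx => le_csSup (hInF k).bddAbove hx
  have hminLB : ∀ (k : Fin L) (x : ℝ), x ∈ ({x : ℝ | ∃ l, Ea k l ∧ x = f l}
      ∪ {x : ℝ | ∃ l, Ep k l ∧ x = f l + 1}) → minOut Ea Ep f k ≤ x :=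
    fun k x hx => csInf_le (hOutF k).bddBelow hx
  have hmin_mem : ∀ k : Fin L, minOut Ea Ep f k ∈ ({x : ℝ | ∃ l, Ea k l ∧ x = f l}
      ∪ {x : ℝ | ∃ l, Ep k l ∧ x = f l + 1}) :=
    fun k => (hOutN k).csInf_mem (hOutF k)
  set d : Fin L → ℝ := fun k => f k - maxIn Ea Ep f k with hd
  have hdOut : ∀ k, d k = minOut Ea Ep f k - f k := by
    intro k
    have := hf k
    simp only [hd]
    linarith
  -- every edge weight is at least d at the head
  have hle_in : ∀ l k, (Ea l k ∨ Ep l k) → d k ≤ edgeWeight Ea f l k := by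
    intro l k h
    by_cases hA : Ea l k
    · have h1 : f l ≤ maxIn Ea Ep f k := hmaxUB k _ (Or.inl ⟨l, hA, rfl⟩)
      simp only [hd, edgeWeight, if_pos hA]
      linarith
    · rcases h with h | hP
      · exact absurd h hA
      have h1 : f l - 1 ≤ maxIn Ea Ep f k := hmaxUB k _ (Or.inr ⟨l, hP, rfl⟩)
      simp only [hd, edgeWeight, if_neg hA]
      linarith
  -- every vertex has an outgoing edge achieving weight d
  have hout_ex : ∀ k, ∃ m, (Ea k m ∨ Ep k m) ∧ edgeWeight Ea f k m = d k := by
    intro k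
    rcases hmin_mem k with ⟨m, hm, he⟩ | ⟨m, hm, he⟩
    · refine ⟨m, Or.inl hm, ?_⟩
      simp only [edgeWeight, if_pos hm]
      rw [hdOut k, ← he]
    · have hA : ¬ Ea k m := by
        intro hA
        have := hminLB k (f m) (Or.inl ⟨m, hA, rfl⟩)
        linarith [he ▸ this]
      refine ⟨m, Or.inr hm, ?_⟩
      simp only [edgeWeight, if_neg hA]
      rw [hdOut k, he]
      ring
  obtain ⟨k0, hk0⟩ := Finite.exists_min d
  choose succ hsucc_e hsucc_w using hout_ex
  set g : ℕ → Fin L := fun n => succ^[n] k0 with hg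
  have hgsucc : ∀ n, g (n+1) = succ (g n) := fun n => Function.iterate_succ_apply' succ n k0
  have hgd : ∀ n, d (g n) = d k0 := by
    intro n
    induction n with
    | zero => rfl
    | succ n ih =>
      refine le_antisymm ?_ (hk0 _)
      rw [hgsucc]
      calc d (succ (g n)) ≤ edgeWeight Ea f (g n) (succ (g n)) :=
            hle_in _ _ (hsucc_e (g n))
        _ = d (g n) := hsucc_w (g n)
        _ = d k0 := ih
  have hge : ∀ n, Ea (g n) (g (n+1)) ∨ Ep (g n) (g (n+1)) := by
    intro n; rw [hgsucc]; exact hsucc_e _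
  have hgw : ∀ n, edgeWeight Ea f (g n) (g (n+1)) = d k0 := by
    intro n; rw [hgsucc, hsucc_w, hgd]
  -- pigeonhole: the chain revisits a vertex
  obtain ⟨a, b, hab, heq⟩ := Fintype.exists_ne_map_eq_of_card_lt
    (fun i : Fin (L+1) => g i.val) (by simp)
  obtain ⟨i, j, hij, hgij⟩ : ∃ i j : ℕ, i < j ∧ g i = g j := by
    rcases lt_or_gt_of_ne hab with h | h
    · exact ⟨a.val, b.val, h, heq⟩
    · exact ⟨b.val, a.val, h, heq.symm⟩
  set ℓc := j - i with hℓc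
  set γc : ℕ → Fin L := fun t => g (i + t) with hγc
  have hℓc1 : 1 ≤ ℓc := by omega
  have hℓcpos : (0:ℝ) < (ℓc : ℝ) := by exact_mod_cast hℓc1
  have hcyc0 : γc ℓc = γc 0 := by
    simp only [hγc]
    rw [show i + ℓc = j by omega, Nat.add_zero]
    exact hgij.symm
  have hcycE : ∀ t < ℓc, Ea (γc t) (γc (t+1)) ∨ Ep (γc t) (γc (t+1)) := by
    intro t _
    have := hge (i + t)
    simpa [hγc, Nat.add_assoc] using this
  have hcycW : ∀ t, edgeWeight Ea f (γc t) (γc (t+1)) = d k0 := by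
    intro t
    have := hgw (i + t)
    simpa [hγc, Nat.add_assoc] using this
  have hsum1 := sum_edgeWeight Ea Ep f ℓc γc hcycE
  have hsum2 : ∑ t ∈ Finset.range ℓc, edgeWeight Ea f (γc t) (γc (t+1))
      = (ℓc : ℝ) * d k0 := by
    rw [Finset.sum_congr rfl (fun t _ => hcycW t)]
    simp [mul_comm]
  have hkey : (precCount Ea Ep ℓc γc : ℝ) = (ℓc : ℝ) * d k0 := by
    rw [hsum2, hcyc0] at hsum1
    linarith
  -- the cycle contains an Ea edge
  have hEaEdge : ∃ t < ℓc, Ea (γc t) (γc (t+1)) := by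
    by_contra hno
    push_neg at hno
    have hall : precCount Ea Ep ℓc γc = ℓc := by
      unfold precCount
      rw [Finset.filter_true_of_mem, Finset.card_range]
      intro t ht
      rw [Finset.mem_range] at ht
      rcases hcycE t ht with h | h
      · exact absurd h (hno t ht)
      · exact ⟨h, hno t ht⟩
    have hd1 : d k0 = 1 := by
      rw [hall] at hkey
      have h2 : (ℓc:ℝ) * 1 = (ℓc:ℝ) * d k0 := by rw [mul_one]; exact hkey
      exact (mul_left_cancel₀ (ne_of_gt hℓcpos) h2).symm
    have hw1 : ∀ l k, (Ea l k ∨ Ep l k) → (1:ℝ) ≤ edgeWeight Ea f l k := by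
      intro l k h
      calc (1:ℝ) = d k0 := hd1.symm
        _ ≤ d k := hk0 k
        _ ≤ _ := hle_in l k h
    obtain ⟨m, hm⟩ := Finite.exists_max f
    have hstep : ∀ a b : Fin L, (Ea a b ∨ Ep a b) → f a = f m → f b = f m := by
      intro a b hab hfa
      have hw := hw1 a b hab
      by_cases hA : Ea a b
      · simp only [edgeWeight, if_pos hA] at hw
        have := hm b
        linarith
      · simp only [edgeWeight, if_neg hA] at hw
        have := hm b
        linarith
    have hconst : ∀ k, f k = f m := by
      intro k
      obtain ⟨ℓ', hℓ', γ', h0, hend, hE'⟩ := hconn m k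
      have hstep2 : ∀ t, t ≤ ℓ' → f (γ' t) = f m := by
        intro t
        induction t with
        | zero => intro _; rw [h0]
        | succ t ih =>
          intro ht
          exact hstep _ _ (hE' t (by omega)) (ih (by omega))
      have := hstep2 ℓ' le_rfl
      rwa [hend] at this
    obtain ⟨a, b, hab⟩ := hEa_ne
    have := hw1 a b (Or.inl hab)
    simp only [edgeWeight, if_pos hab, hconst a, hconst b] at this
    linarith
  -- the set of Ea differences
  have hSfin : {x : ℝ | ∃ l k, Ea l k ∧ x = f k - f l}.Finite :=
    fin_ex2 Ea (fun l k => f k - f l)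
  have hSne : {x : ℝ | ∃ l k, Ea l k ∧ x = f k - f l}.Nonempty := by
    obtain ⟨a, b, hab⟩ := hEa_ne
    exact ⟨f b - f a, a, b, hab, rfl⟩
  have hδle : sInf {x : ℝ | ∃ l k, Ea l k ∧ x = f k - f l} ≤ d k0 := by
    obtain ⟨t, ht, hA⟩ := hEaEdge
    have hmem : f (γc (t+1)) - f (γc t) ∈ {x : ℝ | ∃ l k, Ea l k ∧ x = f k - f l} :=
      ⟨γc t, γc (t+1), hA, rfl⟩
    have hw : f (γc (t+1)) - f (γc t) = d k0 := by
      have := hcycW t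
      simpa [edgeWeight, if_pos hA] using this
    rw [← hw]
    exact csInf_le hSfin.bddBelow hmem
  have hδge : d k0 ≤ sInf {x : ℝ | ∃ l k, Ea l k ∧ x = f k - f l} := by
    apply le_csInf hSne
    rintro x ⟨l, k, hlk, rfl⟩
    have := hle_in l k (Or.inl hlk)
    simp only [edgeWeight, if_pos hlk] at this
    calc d k0 ≤ d k := hk0 k
      _ ≤ f k - f l := this
  have hδ : sInf {x : ℝ | ∃ l k, Ea l k ∧ x = f k - f l} = d k0 :=
    le_antisymm hδle hδge
  constructor
  · constructor
    · -- membership in ratioSet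
      refine ⟨ℓc, γc, ⟨hℓc1, hcyc0, hcycE⟩, ?_⟩
      rw [hδ, hkey]
      field_simp
    · -- lower bound on all cycle ratios
      rintro r ⟨ℓ', γ', ⟨hℓ'1, h0', hE'⟩, rfl⟩
      have hpos : (0:ℝ) < (ℓ' : ℝ) := by exact_mod_cast hℓ'1
      rw [hδ, le_div_iff₀ hpos]
      have hsum := sum_edgeWeight Ea Ep f ℓ' γ' hE'
      rw [h0'] at hsum
      have hlb : (ℓ' : ℝ) * d k0 ≤ ∑ t ∈ Finset.range ℓ', edgeWeight Ea f (γ' t) (γ' (t+1)) := by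
        calc (ℓ' : ℝ) * d k0 = ∑ _t ∈ Finset.range ℓ', d k0 := by simp [mul_comm]
          _ ≤ _ := by
            apply Finset.sum_le_sum
            intro t ht
            rw [Finset.mem_range] at ht
            calc d k0 ≤ d (γ' (t+1)) := hk0 _
              _ ≤ _ := hle_in _ _ (hE' t ht)
      rw [hsum] at hlb
      linarith [hlb, mul_comm (d k0) (ℓ' : ℝ)]
  · -- equality with sInf of all edge weights
    have hTfin : {x : ℝ | ∃ l k, (Ea l k ∨ Ep l k) ∧ x = edgeWeight Ea f l k}.Finite :=
      fin_ex2 _ _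
    have hTne : {x : ℝ | ∃ l k, (Ea l k ∨ Ep l k) ∧ x = edgeWeight Ea f l k}.Nonempty := by
      obtain ⟨a, b, hab⟩ := hEa_ne
      exact ⟨edgeWeight Ea f a b, a, b, Or.inl hab, rfl⟩
    rw [hδ]
    apply le_antisymm
    · apply le_csInf hTne
      rintro x ⟨l, k, hlk, rfl⟩
      calc d k0 ≤ d k := hk0 k
        _ ≤ _ := hle_in l k hlk
    · have hmem : edgeWeight Ea f (γc 0) (γc 1)
          ∈ {x : ℝ | ∃ l k, (Ea l k ∨ Ep l k) ∧ x = edgeWeight Ea f l k} :=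
        ⟨γc 0, γc 1, hcycE 0 hℓc1, rfl⟩
      have := csInf_le hTfin.bddBelow hmem
      rwa [hcycW 0] at this
end

section
/- Let S ∈ ℝ^{K×K} have nonnegative entries, let τ > 0, and let v, w ∈ ℝ^K be entrywise positive with Sw and Sᵗv entrywise positive solving the Dyson equation. Define ĥ ∈ ℝ^K by ĥ_i := √(v_i (Sw)_i) and the matrix F_r := ½ ( D(v/ĥ) S D(w/ĥ) + D(w/ĥ) Sᵗ D(v/ĥ) ), where D(u) is the diagonal matrix with the vector u on its diagonal. Then F_r is symmetric, has nonnegative entries, satisfies F_r ĥ = ĥ with ĥ entrywise positive, and every eigenvalue of F_r lies in [−1, 1]. -/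
/-!
The Dyson equation at `i`, with `A = (Sw)ᵢ` and `B = (Sᵗv)ᵢ`, gives
`vᵢ A = wᵢ B = AB / (AB + τ)`, so both products equal `ĥᵢ²`; this makes `ĥ` a fixed point of `F_r`.
Writing `F_r = ½ (M + Mᵗ)` with the nonnegative matrix `M = D(v/ĥ) S D(w/ĥ)`, the eigenvalue bound
is the elementary Perron–Frobenius estimate: a nonnegative matrix with a positive eigenvector for
the eigenvalue `r` has all its real eigenvalues in `[-r, r]`.
-/

open Matrix

section DiagonalSandwich

variable {ι α : Type*} [Fintype ι] [DecidableEq ι] [CommSemiring α]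

theorem Matrix.diagonal_mul_mul_diagonal_apply (a b : ι → α) (S : Matrix ι ι α) (i j : ι) :
    (diagonal a * S * diagonal b) i j = a i * S i j * b j := by
  rw [mul_diagonal, diagonal_mul]

theorem Matrix.transpose_diagonal_mul_mul_diagonal (a b : ι → α) (S : Matrix ι ι α) :
    (diagonal a * S * diagonal b)ᵀ = diagonal b * Sᵀ * diagonal a := by
  simp only [transpose_mul, diagonal_transpose, Matrix.mul_assoc]

theorem Matrix.diagonal_mul_mul_diagonal_mulVec (a b x : ι → α) (S : Matrix ι ι α) :
    (diagonal a * S * diagonal b) *ᵥ x = a * S *ᵥ (b * x) := by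
  ext i
  rw [← mulVec_mulVec, ← mulVec_mulVec, mulVec_diagonal, Pi.mul_apply]
  congr 2
  ext j
  rw [mulVec_diagonal, Pi.mul_apply]

end DiagonalSandwich

theorem Matrix.abs_le_of_mulVec_eq_smul_of_pos {ι : Type*} [Fintype ι] {F : Matrix ι ι ℝ}
    (hF : ∀ i j, 0 ≤ F i j) {h : ι → ℝ} (hh : ∀ i, 0 < h i) {r : ℝ} (hFh : F *ᵥ h = r • h)
    {μ : ℝ} {x : ι → ℝ} (hx : x ≠ 0) (hFx : F *ᵥ x = μ • x) : |μ| ≤ r := by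
  obtain ⟨k, hk⟩ := Function.ne_iff.mp hx
  have : Nonempty ι := ⟨k⟩
  -- Test the eigenvalue equation at an index maximising `|x j| / h j`.
  obtain ⟨i, -, hi⟩ := Finset.exists_max_image Finset.univ (fun j => |x j| / h j)
    Finset.univ_nonempty
  set c := |x i| / h i
  have hxc : ∀ j, |x j| ≤ c * h j := fun j =>
    (div_le_iff₀ (hh j)).1 (hi j (Finset.mem_univ j))
  have hc : 0 < c := pos_of_mul_pos_left ((abs_pos.2 hk).trans_le (hxc k)) (hh k).le
  have hci : c * h i = |x i| := div_mul_cancel₀ _ (hh i).ne'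
  have hxi : 0 < |x i| := hci ▸ mul_pos hc (hh i)
  refine le_of_mul_le_mul_right ?_ hxi
  calc |μ| * |x i| = |∑ j, F i j * x j| := by
        rw [← abs_mul, ← smul_eq_mul, ← Pi.smul_apply, ← hFx]; rfl
    _ ≤ ∑ j, F i j * |x j| := by
        refine (Finset.abs_sum_le_sum_abs _ _).trans_eq (Finset.sum_congr rfl fun j _ => ?_)
        rw [abs_mul, abs_of_nonneg (hF i j)]
    _ ≤ ∑ j, F i j * (c * h j) :=
        Finset.sum_le_sum fun j _ => mul_le_mul_of_nonneg_left (hxc j) (hF i j)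
    _ = c * (F *ᵥ h) i := by
        simp only [mulVec, dotProduct, Finset.mul_sum]
        exact Finset.sum_congr rfl fun j _ => by ring
    _ = r * |x i| := by rw [hFh, Pi.smul_apply, smul_eq_mul, ← hci]; ring

theorem mul_eq_div_of_one_div_eq_add_div {a A B τ : ℝ} (hB : B ≠ 0) (hAB : A * B + τ ≠ 0)
    (h : 1 / a = A + τ / B) : a * A = A * B / (A * B + τ) := by
  have ha : a = B / (A * B + τ) := by
    rw [← one_div_one_div a, h]
    field_simp
  rw [ha]
  ring

theorem mul_eq_mul_of_dyson {a b A B τ : ℝ} (hA : 0 < A) (hB : 0 < B) (hτ : 0 < τ)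
    (ha : 1 / a = A + τ / B) (hb : 1 / b = B + τ / A) : a * A = b * B := by
  rw [mul_eq_div_of_one_div_eq_add_div hB.ne' (by positivity) ha,
    mul_eq_div_of_one_div_eq_add_div hA.ne' (by positivity) hb, mul_comm B A]

theorem stmt_18_general (K : ℕ) (S : Matrix (Fin K) (Fin K) ℝ)
    (hS : ∀ i j, 0 ≤ S i j) (τ : ℝ) (hτ : 0 < τ)
    (v w : Fin K → ℝ) (hv : ∀ i, 0 < v i) (hw : ∀ i, 0 < w i)
    (hSw : ∀ i, 0 < S.mulVec w i) (hStv : ∀ i, 0 < Sᵀ.mulVec v i)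
    (heq1 : ∀ i, 1 / v i = S.mulVec w i + τ / Sᵀ.mulVec v i)
    (heq2 : ∀ i, 1 / w i = Sᵀ.mulVec v i + τ / S.mulVec w i) :
    let h : Fin K → ℝ := fun i => Real.sqrt (v i * S.mulVec w i)
    let F : Matrix (Fin K) (Fin K) ℝ :=
      (1 / 2 : ℝ) • (Matrix.diagonal (fun i => v i / h i) * S
          * Matrix.diagonal (fun i => w i / h i)
        + Matrix.diagonal (fun i => w i / h i) * Sᵀ
          * Matrix.diagonal (fun i => v i / h i))
    F.IsSymm ∧ (∀ i j, 0 ≤ F i j) ∧ (∀ i, 0 < h i) ∧ F.mulVec h = h ∧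
    ∀ (μ : ℝ) (x : Fin K → ℝ), x ≠ 0 → F.mulVec x = μ • x → -1 ≤ μ ∧ μ ≤ 1 := by
  intro h F
  have hh : ∀ i, 0 < h i := fun i => Real.sqrt_pos.2 (mul_pos (hv i) (hSw i))
  have hvSw : ∀ i, v i * S.mulVec w i = h i ^ 2 := fun i =>
    (Real.sq_sqrt (mul_pos (hv i) (hSw i)).le).symm
  have hwStv : ∀ i, w i * Sᵀ.mulVec v i = h i ^ 2 := fun i =>
    (mul_eq_mul_of_dyson (hSw i) (hStv i) hτ (heq1 i) (heq2 i)).symm.trans (hvSw i)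
  have hvh : (fun i => v i / h i) * h = v := funext fun i => div_mul_cancel₀ _ (hh i).ne'
  have hwh : (fun i => w i / h i) * h = w := funext fun i => div_mul_cancel₀ _ (hh i).ne'
  have hFnn : ∀ i j, 0 ≤ F i j := fun i j => by
    simp only [F, Matrix.smul_apply, Matrix.add_apply, diagonal_mul_mul_diagonal_apply,
      transpose_apply, smul_eq_mul]
    have := hh i; have := hh j; have := hv i; have := hv j; have := hw i; have := hw j
    have := hS i j; have := hS j i
    positivity
  have hFh : F *ᵥ h = h := by
    ext i
    simp only [F, smul_mulVec, add_mulVec, diagonal_mul_mul_diagonal_mulVec, hvh, hwh,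
      Pi.smul_apply, Pi.add_apply, Pi.mul_apply, smul_eq_mul]
    rw [div_mul_eq_mul_div (v i), div_mul_eq_mul_div (w i), hvSw, hwStv]
    field_simp [(hh i).ne']
    ring
  refine ⟨?_, hFnn, hh, hFh, fun μ x hx hFx => ?_⟩
  · simp only [F]
    rw [← transpose_diagonal_mul_mul_diagonal]
    exact (isSymm_add_transpose_self _).smul _
  exact abs_le.1 (abs_le_of_mulVec_eq_smul_of_pos hFnn hh (by rw [hFh, one_smul]) hx hFx)

/-- For an entrywise positive solution `(v, w)` of the Dyson equation
(with `S` nonnegative, `τ > 0`), set `ĥ_i := √(v_i (Sw)_i)` and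
`F_r := ½ (D(v/ĥ) S D(w/ĥ) + D(w/ĥ) Sᵗ D(v/ĥ))`. Then `F_r` is symmetric with nonnegative
entries, `ĥ` is entrywise positive with `F_r ĥ = ĥ`, and every eigenvalue of `F_r` lies in
`[−1, 1]`. -/
theorem stmt_18 (K : ℕ) (hK : 1 ≤ K) (S : Matrix (Fin K) (Fin K) ℝ)
    (hS : ∀ i j, 0 ≤ S i j) (τ : ℝ) (hτ : 0 < τ)
    (v w : Fin K → ℝ) (hv : ∀ i, 0 < v i) (hw : ∀ i, 0 < w i)
    (hSw : ∀ i, 0 < S.mulVec w i) (hStv : ∀ i, 0 < Sᵀ.mulVec v i)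
    (heq1 : ∀ i, 1 / v i = S.mulVec w i + τ / Sᵀ.mulVec v i)
    (heq2 : ∀ i, 1 / w i = Sᵀ.mulVec v i + τ / S.mulVec w i) :
    let h : Fin K → ℝ := fun i => Real.sqrt (v i * S.mulVec w i)
    let F : Matrix (Fin K) (Fin K) ℝ :=
      (1 / 2 : ℝ) • (Matrix.diagonal (fun i => v i / h i) * S
          * Matrix.diagonal (fun i => w i / h i)
        + Matrix.diagonal (fun i => w i / h i) * Sᵀ
          * Matrix.diagonal (fun i => v i / h i))
    F.IsSymm ∧ (∀ i j, 0 ≤ F i j) ∧ (∀ i, 0 < h i) ∧ F.mulVec h = h ∧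
    ∀ (μ : ℝ) (x : Fin K → ℝ), x ≠ 0 → F.mulVec x = μ • x → -1 ≤ μ ∧ μ ≤ 1 :=
  stmt_18_general K S hS τ hτ v w hv hw hSw hStv heq1 heq2
end
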